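/- arXiv:1109.3793 — 8 statements merged into one kernel-verified Lean document; each statement's English description precedes it below -/
import Mathlib

section
/- Let X be a compact Hausdorff space, φ₁,…,φ_m real-valued continuous functions on X, and suppose μ = Σⱼ wⱼ δ_{xⱼ} where x₁,…,xₙ are distinct points of X and wⱼ > 0 with Σⱼ wⱼ = 1 and Σⱼ wⱼ φᵢ(xⱼ) = 0 for all i. If there exist real numbers c₁,…,cₙ, not all zero, with Σⱼ cⱼ = 0 and Σⱼ cⱼ φᵢ(xⱼ) = 0 for all i, then μ is not an extreme point of C(X,1,φ). -/
open MeasureTheory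
open scoped ENNReal

/-- The constrained set `C(X,1,φ)` of probability Borel measures annihilating the `φᵢ`. -/
def constrainedSet {X : Type*} [TopologicalSpace X] [MeasurableSpace X] {m : ℕ}
    (φ : Fin m → X → ℝ) : Set (Measure X) :=
  {μ | IsProbabilityMeasure μ ∧ ∀ i, ∫ x, φ i x ∂μ = 0}

lemma myIntegral {X : Type*} [TopologicalSpace X] [CompactSpace X] [T2Space X]
    [MeasurableSpace X] [BorelSpace X] {n : ℕ} (x : Fin n → X)
    (a : Fin n → ℝ) (ha : ∀ j, 0 ≤ a j) (f : X → ℝ) (hf : Continuous f) :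
    ∫ y, f y ∂(∑ j, ENNReal.ofReal (a j) • Measure.dirac (x j)) = ∑ j, a j * f (x j) := by
  haveI : ∀ j, IsFiniteMeasure (ENNReal.ofReal (a j) • Measure.dirac (x j)) :=
    fun j => ⟨by simp [lt_top_iff_ne_top]⟩
  rw [integral_finset_sum_measure (fun j _ =>
    hf.integrable_of_hasCompactSupport (HasCompactSupport.of_compactSpace f))]
  refine Finset.sum_congr rfl fun j _ => ?_
  rw [integral_smul_measure, integral_dirac, ENNReal.toReal_ofReal (ha j), smul_eq_mul]

lemma myMass {X : Type*} [TopologicalSpace X] [CompactSpace X] [T2Space X]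
    [MeasurableSpace X] [BorelSpace X] {n : ℕ} (x : Fin n → X)
    (a : Fin n → ℝ) (ha : ∀ j, 0 ≤ a j) :
    (∑ j, ENNReal.ofReal (a j) • Measure.dirac (x j)) Set.univ = ENNReal.ofReal (∑ j, a j) := by
  simp only [Measure.finset_sum_apply, Measure.smul_apply, smul_eq_mul, measure_univ, mul_one]
  rw [ENNReal.ofReal_sum_of_nonneg (fun j _ => ha j)]

lemma mySingleton {X : Type*} [TopologicalSpace X] [CompactSpace X] [T2Space X]
    [MeasurableSpace X] [BorelSpace X] {n : ℕ} (x : Fin n → X) (hx : Function.Injective x)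
    (a : Fin n → ℝ) (j : Fin n) :
    (∑ k, ENNReal.ofReal (a k) • Measure.dirac (x k)) {x j} = ENNReal.ofReal (a j) := by
  simp only [Measure.finset_sum_apply, Measure.smul_apply, smul_eq_mul]
  rw [Finset.sum_eq_single j]
  · simp [Measure.dirac_apply]
  · intro k _ hk
    have hne : x k ≠ x j := fun h => hk (hx h)
    simp [Measure.dirac_apply, Set.indicator_apply, hne]
  · simp

/-- If `μ = Σⱼ wⱼ δ_{xⱼ}` with distinct base points, positive weights summing to `1` and
satisfying the linear constraints, and if there is a nonzero tuple `c` with `Σⱼ cⱼ = 0` and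
`Σⱼ cⱼ φᵢ(xⱼ) = 0` for all `i`, then `μ` is not an extreme point of `C(X,1,φ)`. -/
theorem stmt4 {X : Type*} [TopologicalSpace X] [CompactSpace X] [T2Space X]
    [MeasurableSpace X] [BorelSpace X] {m n : ℕ}
    (φ : Fin m → X → ℝ) (hφ : ∀ i, Continuous (φ i))
    (x : Fin n → X) (hx : Function.Injective x)
    (w : Fin n → ℝ) (hw : ∀ j, 0 < w j) (hw1 : ∑ j, w j = 1)
    (hworth : ∀ i, ∑ j, w j * φ i (x j) = 0)
    (μ : Measure X) (hμ : μ = ∑ j, (ENNReal.ofReal (w j)) • Measure.dirac (x j))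
    (c : Fin n → ℝ) (hc : c ≠ 0) (hc0 : ∑ j, c j = 0)
    (hcorth : ∀ i, ∑ j, c j * φ i (x j) = 0) :
    ∃ μ₁ ∈ constrainedSet φ, ∃ μ₂ ∈ constrainedSet φ, ∃ t : ℝ≥0∞,
      0 < t ∧ t < 1 ∧ μ = t • μ₁ + (1 - t) • μ₂ ∧ ¬(μ₁ = μ ∧ μ₂ = μ) := by
  have hn : 0 < n := by
    rcases Nat.eq_zero_or_pos n with h | h
    · exfalso; subst h; simp at hw1
    · exact h
  haveI : Nonempty (Fin n) := ⟨⟨0, hn⟩⟩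
  set ε : ℝ := Finset.univ.inf' Finset.univ_nonempty (fun j => w j / (|c j| + 1)) with hεdef
  have hεpos : 0 < ε := by
    rw [hεdef, Finset.lt_inf'_iff]
    intro j _
    exact div_pos (hw j) (by positivity)
  have hεlt : ∀ j, ε * |c j| < w j := by
    intro j
    have h1 : ε ≤ w j / (|c j| + 1) := Finset.inf'_le _ (Finset.mem_univ j)
    have h2 : ε * (|c j| + 1) ≤ w j := by
      rw [← le_div_iff₀ (by positivity)]; exact h1
    nlinarith [abs_nonneg (c j)]
  have ha1 : ∀ j, 0 < w j + ε * c j := by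
    intro j
    have := hεlt j
    have h3 : ε * c j ≥ -(ε * |c j|) := by
      rw [← mul_neg]
      exact mul_le_mul_of_nonneg_left (neg_abs_le _) hεpos.le
    linarith
  have ha2 : ∀ j, 0 < w j - ε * c j := by
    intro j
    have := hεlt j
    have h3 : ε * c j ≤ ε * |c j| :=
      mul_le_mul_of_nonneg_left (le_abs_self _) hεpos.le
    linarith
  set μ₁ : Measure X := ∑ j, ENNReal.ofReal (w j + ε * c j) • Measure.dirac (x j) with hμ₁
  set μ₂ : Measure X := ∑ j, ENNReal.ofReal (w j - ε * c j) • Measure.dirac (x j) with hμ₂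
  have hmem : ∀ (s : ℝ), (∀ j, 0 ≤ w j + s * c j) →
      (∑ j, ENNReal.ofReal (w j + s * c j) • Measure.dirac (x j)) ∈
        constrainedSet φ := by
    intro s hs
    simp only [constrainedSet, Set.mem_setOf_eq]
    refine ⟨⟨?_⟩, ?_⟩
    · rw [myMass x _ hs]
      have : ∑ j, (w j + s * c j) = 1 := by
        rw [Finset.sum_add_distrib, hw1, ← Finset.mul_sum, hc0, mul_zero, add_zero]
      rw [this, ENNReal.ofReal_one]
    · intro i
      rw [myIntegral x _ hs (φ i) (hφ i)]
      have : ∑ j, (w j + s * c j) * φ i (x j)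
          = ∑ j, w j * φ i (x j) + s * ∑ j, c j * φ i (x j) := by
        rw [Finset.mul_sum, ← Finset.sum_add_distrib]
        congr 1; ext j; ring
      rw [this, hworth i, hcorth i, mul_zero, add_zero]
  have hm1 : μ₁ ∈ constrainedSet φ :=
    hmem ε (fun j => (ha1 j).le)
  have hm2 : μ₂ ∈ constrainedSet φ := by
    have := hmem (-ε) (fun j => by have := ha2 j; push_cast; linarith)
    simpa [hμ₂, sub_eq_add_neg, neg_mul] using this
  refine ⟨μ₁, hm1, μ₂, hm2, 2⁻¹, by simp, by simp [ENNReal.inv_lt_one], ?_, ?_⟩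
  · have h12 : (1 : ℝ≥0∞) - 2⁻¹ = 2⁻¹ := by
      rw [ENNReal.sub_eq_of_eq_add_rev] <;> simp [ENNReal.inv_two_add_inv_two]
    rw [h12, hμ, hμ₁, hμ₂, Finset.smul_sum, Finset.smul_sum, ← Finset.sum_add_distrib]
    refine Finset.sum_congr rfl fun j _ => ?_
    rw [smul_smul, smul_smul, ← add_smul]
    congr 1
    rw [← mul_add, ← ENNReal.ofReal_add (ha1 j).le (ha2 j).le]
    have : w j + ε * c j + (w j - ε * c j) = 2 * w j := by ring
    rw [this, ENNReal.ofReal_mul (by norm_num : (0:ℝ) ≤ 2)]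
    rw [← mul_assoc, ENNReal.ofReal_ofNat,
      ENNReal.inv_mul_cancel (by norm_num) (by norm_num), one_mul]
  · rintro ⟨h1, _⟩
    obtain ⟨j, hj⟩ := Function.ne_iff.mp hc
    have := congrArg (fun ν : Measure X => ν {x j}) h1
    simp only [hμ₁, hμ] at this
    rw [mySingleton x hx _ j, mySingleton x hx _ j] at this
    rw [ENNReal.ofReal_eq_ofReal_iff (ha1 j).le (hw j).le] at this
    have : ε * c j = 0 := by linarith
    rcases mul_eq_zero.mp this with h | h
    · exact absurd h hεpos.ne'
    · exact hj h
end

section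
/- Let X be a compact Hausdorff space, φ₁,…,φ_m real-valued continuous functions on X, and suppose μ = Σⱼ wⱼ δ_{xⱼ} where x₁,…,xₙ are distinct points of X and wⱼ > 0 with Σⱼ wⱼ = 1 and Σⱼ wⱼ φᵢ(xⱼ) = 0 for all i. If the only real tuple (c₁,…,cₙ) with Σⱼ cⱼ = 0 and Σⱼ cⱼ φ(xⱼ) = 0 is zero, then μ is an extreme point of C(X,1,φ). -/
open MeasureTheory
open scoped ENNReal

/-- If `μ = Σⱼ wⱼ δ_{xⱼ}` with distinct base points, positive weights summing to `1` and
satisfying the linear constraints, and if `0` is an interior point of the convex hull of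
`{φ(x₁),…,φ(xₙ)}` (i.e. the only tuple `c` with `Σⱼ cⱼ = 0` and `Σⱼ cⱼ φ(xⱼ) = 0` is zero),
then `μ` is an extreme point of `C(X,1,φ)`. -/
theorem stmt5 {X : Type*} [TopologicalSpace X] [CompactSpace X] [T2Space X]
    [MeasurableSpace X] [BorelSpace X] {m n : ℕ}
    (φ : Fin m → X → ℝ) (hφ : ∀ i, Continuous (φ i))
    (x : Fin n → X) (hx : Function.Injective x)
    (w : Fin n → ℝ) (hw : ∀ j, 0 < w j) (hw1 : ∑ j, w j = 1)
    (hworth : ∀ i, ∑ j, w j * φ i (x j) = 0)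
    (μ : Measure X) (hμ : μ = ∑ j, (ENNReal.ofReal (w j)) • Measure.dirac (x j))
    (hint : ∀ c : Fin n → ℝ, ∑ j, c j = 0 → (∀ i, ∑ j, c j * φ i (x j) = 0) → c = 0) :
    μ ∈ constrainedSet φ ∧
      ∀ μ₁ ∈ constrainedSet φ, ∀ μ₂ ∈ constrainedSet φ, ∀ t : ℝ≥0∞,
        0 < t → t < 1 → μ = t • μ₁ + (1 - t) • μ₂ → μ₁ = μ ∧ μ₂ = μ := by
  set S : Set X := Set.range x with hSdef
  have hSm : MeasurableSet S := (Set.finite_range x).isClosed.measurableSet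
  -- integral against a finite combination of diracs
  have keyInt : ∀ (c : Fin n → ℝ≥0∞), (∀ j, c j ≠ ⊤) → ∀ (f : X → ℝ), Continuous f →
      ∫ y, f y ∂(∑ j, c j • Measure.dirac (x j)) = ∑ j, (c j).toReal * f (x j) := by
    intro c hc f hf
    rw [integral_finset_sum_measure]
    · exact Finset.sum_congr rfl fun j _ => by
        rw [integral_smul_measure, integral_dirac, smul_eq_mul]
    · intro j _
      exact (hf.integrable_of_hasCompactSupport
        (HasCompactSupport.of_compactSpace f)).smul_measure (hc j)
  -- a measure vanishing outside S is a combination of diracs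
  have key : ∀ ν : Measure X, ν Sᶜ = 0 →
      ν = ∑ j, (ν {x j}) • Measure.dirac (x j) := by
    intro ν hν
    ext A hA
    rw [Measure.finset_sum_apply]
    have h0 : ν (A \ S) = 0 := measure_mono_null (fun y hy => hy.2) hν
    have h1 : ν A = ν (A ∩ S) := by
      rw [← measure_inter_add_diff A hSm, h0, add_zero]
    have h2 : A ∩ S = ⋃ j ∈ Finset.univ, (A ∩ {x j}) := by
      ext y
      simp only [Set.mem_inter_iff, Set.mem_iUnion, Set.mem_singleton_iff,
        Finset.mem_univ, exists_true_left, hSdef, Set.mem_range, exists_prop]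
      aesop
    rw [h1, h2, measure_biUnion_finset]
    · refine Finset.sum_congr rfl fun j _ => ?_
      rw [Measure.smul_apply, Measure.dirac_apply' _ hA, smul_eq_mul]
      by_cases hj : x j ∈ A
      · rw [Set.inter_eq_self_of_subset_right (Set.singleton_subset_iff.2 hj),
          Set.indicator_of_mem hj, Pi.one_apply, mul_one]
      · rw [Set.indicator_of_notMem hj, mul_zero]
        have : A ∩ {x j} = ∅ := by
          ext y; simp only [Set.mem_inter_iff, Set.mem_singleton_iff, Set.mem_empty_iff_false,
            iff_false]
          rintro ⟨hyA, rfl⟩; exact hj hyA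
        rw [this, measure_empty]
    · intro i _ j _ hij
      refine Set.disjoint_left.2 ?_
      rintro y ⟨_, hyi⟩ ⟨_, hyj⟩
      exact hij (hx (by rw [← Set.mem_singleton_iff.1 hyi, ← Set.mem_singleton_iff.1 hyj]))
    · exact fun j _ => hA.inter (measurableSet_singleton _)
  -- μ vanishes outside S
  have hμS : μ Sᶜ = 0 := by
    rw [hμ, Measure.finset_sum_apply]
    refine Finset.sum_eq_zero fun j _ => ?_
    have hxj : x j ∉ Sᶜ := fun h => h (Set.mem_range_self j)
    rw [Measure.smul_apply, Measure.dirac_apply, Set.indicator_of_notMem hxj, smul_zero]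
  -- main claim: any constrained measure supported in S equals μ
  have main : ∀ ν : Measure X, ν ∈ constrainedSet φ → ν Sᶜ = 0 → ν = μ := by
    rintro ν ⟨hνp, hνc⟩ hν0
    have hfin : ∀ j, ν {x j} ≠ ⊤ := fun j => measure_ne_top ν _
    set a : Fin n → ℝ := fun j => (ν {x j}).toReal with ha
    have hofa : ∀ j, ENNReal.ofReal (a j) = ν {x j} := fun j => ENNReal.ofReal_toReal (hfin j)
    have hνeq := key ν hν0
    have hsum : ∑ j, a j = 1 := by
      have h1 : (∑ j, ν {x j}) = 1 := by
        have hu : ν Set.univ = 1 := hνp.measure_univ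
        rw [hνeq, Measure.finset_sum_apply] at hu
        simpa [Measure.smul_apply, Measure.dirac_apply] using hu
      calc ∑ j, a j = (∑ j, ν {x j}).toReal := (ENNReal.toReal_sum fun j _ => hfin j).symm
        _ = 1 := by rw [h1, ENNReal.toReal_one]
    have hcons : ∀ i, ∑ j, a j * φ i (x j) = 0 := by
      intro i
      have h := hνc i
      rw [hνeq, keyInt _ (fun j => hfin j) _ (hφ i)] at h
      exact h
    have haw : a = w := by
      have h := hint (fun j => a j - w j)
        (by rw [Finset.sum_sub_distrib, hsum, hw1, sub_self])
        (fun i => by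
          simp only [sub_mul]
          rw [Finset.sum_sub_distrib, hcons i, hworth i, sub_self])
      funext j
      have := congrFun h j
      simpa [sub_eq_zero] using this
    rw [hνeq, hμ]
    exact Finset.sum_congr rfl fun j _ => by rw [← hofa j, haw]
  constructor
  · constructor
    · constructor
      rw [hμ, Measure.finset_sum_apply]
      simp only [Measure.smul_apply, Measure.dirac_apply, Set.indicator_univ, Pi.one_apply,
        smul_eq_mul, mul_one]
      rw [← ENNReal.ofReal_sum_of_nonneg (fun j _ => (hw j).le), hw1, ENNReal.ofReal_one]
    · intro i
      rw [hμ, keyInt _ (fun j => ENNReal.ofReal_ne_top) _ (hφ i)]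
      have : ∀ j, (ENNReal.ofReal (w j)).toReal = w j := fun j =>
        ENNReal.toReal_ofReal (hw j).le
      simp only [this]
      exact hworth i
  · intro μ₁ h₁ μ₂ h₂ t ht0 ht1 heq
    have hadd : t * μ₁ Sᶜ + (1 - t) * μ₂ Sᶜ = 0 := by
      have := congrArg (fun ρ : Measure X => ρ Sᶜ) heq
      simpa [Measure.add_apply, Measure.smul_apply, hμS] using this.symm
    rw [add_eq_zero] at hadd
    have h1z : μ₁ Sᶜ = 0 := by
      rcases mul_eq_zero.1 hadd.1 with h | h
      · exact absurd h ht0.ne'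
      · exact h
    have h2z : μ₂ Sᶜ = 0 := by
      rcases mul_eq_zero.1 hadd.2 with h | h
      · exact absurd h (tsub_pos_of_lt ht1).ne'
      · exact h
    exact ⟨main μ₁ h₁ h1z, main μ₂ h₂ h2z⟩
end

section
/- Let W₁,…,Wₙ be positive semidefinite N×N complex matrices with Σₖ Wₖ = I_N such that the family of subspaces {Ran Wₖ} is weakly independent, and let x₁,…,xₙ be distinct points of a compact Hausdorff space X. Then μ = Σₖ Wₖ δ_{xₖ} is an extreme point of the convex set of positive N×N-matrix-valued Borel measures ν on X with ν(X) = I_N. -/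
open MeasureTheory
open scoped Matrix.Norms.L2Operator ComplexOrder Classical

open scoped Matrix

/-- `T` lives on the subspace `M` of `ℂᴺ`: equivalently `T = T P_M = P_M T`, i.e. the range of
`T` is contained in `M` and `T` vanishes on `Mᗮ`. -/
def LivesOn {N : ℕ} (T : Matrix (Fin N) (Fin N) ℂ)
    (M : Submodule ℂ (EuclideanSpace ℂ (Fin N))) : Prop :=
  (∀ v, Matrix.toEuclideanLin T v ∈ M) ∧ ∀ v ∈ Mᗮ, Matrix.toEuclideanLin T v = 0

/-- A family of subspaces of `ℂᴺ` is weakly independent if the only way matrices `Tⱼ` living on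
`Mⱼ` can sum to `0` is when all `Tⱼ = 0`. -/
def WeaklyIndependent {N n : ℕ} (M : Fin n → Submodule ℂ (EuclideanSpace ℂ (Fin N))) : Prop :=
  ∀ T : Fin n → Matrix (Fin N) (Fin N) ℂ,
    (∀ j, LivesOn (T j) (M j)) → (∑ j, T j) = 0 → ∀ j, T j = 0

namespace Stmt7Aux

open Matrix

variable {N : ℕ}

lemma eq_zero_of_mulVec {A : Matrix (Fin N) (Fin N) ℂ} (h : ∀ y, A *ᵥ y = 0) : A = 0 := by
  ext i j
  have := congrFun (h (Pi.single j 1)) i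
  simpa [Matrix.mulVec_single] using this

lemma real_smul_eq (t : ℝ) (A : Matrix (Fin N) (Fin N) ℂ) : t • A = (t : ℂ) • A := by
  ext i j
  simp [Complex.real_smul]

lemma psd_real_smul {t : ℝ} (ht : 0 ≤ t) {A : Matrix (Fin N) (Fin N) ℂ}
    (hA : A.PosSemidef) : (t • A).PosSemidef := by
  rw [real_smul_eq]
  refine Matrix.PosSemidef.of_dotProduct_mulVec_nonneg ?_ ?_
  · unfold Matrix.IsHermitian
    rw [Matrix.conjTranspose_smul, hA.1]
    norm_num
  · intro y
    rw [Matrix.smul_mulVec, dotProduct_smul, smul_eq_mul]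
    exact mul_nonneg (by exact_mod_cast ht) (hA.dotProduct_mulVec_nonneg y)

lemma psd_add_eq_zero {A B : Matrix (Fin N) (Fin N) ℂ} (hA : A.PosSemidef)
    (hB : B.PosSemidef) (h : A + B = 0) : A = 0 := by
  apply eq_zero_of_mulVec
  intro y
  rw [← hA.dotProduct_mulVec_zero_iff]
  have h1 : star y ⬝ᵥ A *ᵥ y + star y ⬝ᵥ B *ᵥ y = 0 := by
    rw [← dotProduct_add, ← Matrix.add_mulVec, h, Matrix.zero_mulVec,
      dotProduct_zero]
  have h2 : star y ⬝ᵥ A *ᵥ y ≤ 0 := by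
    rw [eq_neg_of_add_eq_zero_left h1]
    exact neg_nonpos.mpr (hB.dotProduct_mulVec_nonneg y)
  exact le_antisymm h2 (hA.dotProduct_mulVec_nonneg y)

lemma real_smul_cancel {t : ℝ} (ht : t ≠ 0) {A : Matrix (Fin N) (Fin N) ℂ}
    (h : t • A = 0) : A = 0 := by
  have := congrArg (t⁻¹ • ·) h
  simpa [smul_smul, inv_mul_cancel₀ ht] using this

lemma ker_of_combo {W A B : Matrix (Fin N) (Fin N) ℂ} (hA : A.PosSemidef)
    (hB : B.PosSemidef) (h : W = A + B) {y : Fin N → ℂ} (hy : W *ᵥ y = 0) :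
    A *ᵥ y = 0 := by
  rw [← hA.dotProduct_mulVec_zero_iff]
  have h1 : star y ⬝ᵥ A *ᵥ y + star y ⬝ᵥ B *ᵥ y = 0 := by
    rw [← dotProduct_add, ← Matrix.add_mulVec, ← h, hy, dotProduct_zero]
  have h2 : star y ⬝ᵥ A *ᵥ y ≤ 0 := by
    rw [eq_neg_of_add_eq_zero_left h1]
    exact neg_nonpos.mpr (hB.dotProduct_mulVec_nonneg y)
  exact le_antisymm h2 (hA.dotProduct_mulVec_nonneg y)

lemma real_smul_mulVec_zero {t : ℝ} (ht : t ≠ 0) {A : Matrix (Fin N) (Fin N) ℂ}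
    {y : Fin N → ℂ} (h : (t • A) *ᵥ y = 0) : A *ᵥ y = 0 := by
  rw [real_smul_eq, Matrix.smul_mulVec] at h
  rcases smul_eq_zero.mp h with h' | h'
  · exact absurd (Complex.ofReal_eq_zero.mp h') ht
  · exact h'

local notation "E" => EuclideanSpace ℂ (Fin N)

lemma mem_orth_range_iff {T : E →ₗ[ℂ] E} (hT : T.IsSymmetric) (v : E) :
    v ∈ (LinearMap.range T)ᗮ ↔ T v = 0 := by
  rw [Submodule.mem_orthogonal]
  constructor
  · intro h
    have h2 : ∀ u : E, inner ℂ u (T v) = (0 : ℂ) := fun u => by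
      rw [← hT u v]; exact h (T u) ⟨u, rfl⟩
    have := h2 (T v)
    rwa [inner_self_eq_zero] at this
  · rintro h u ⟨w, rfl⟩
    rw [hT w v, h, inner_zero_right]

lemma toEuclideanLin_eq_zero_iff (A : Matrix (Fin N) (Fin N) ℂ) (v : E) :
    toEuclideanLin A v = 0 ↔ A *ᵥ (WithLp.equiv 2 (Fin N → ℂ) v) = 0 := by
  rw [toEuclideanLin_apply]
  constructor
  · intro h
    simpa using congrArg (WithLp.equiv 2 (Fin N → ℂ)) h
  · intro h
    rw [show A *ᵥ v.ofLp = 0 from h]; simp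

lemma livesOn_of {V W : Matrix (Fin N) (Fin N) ℂ} (hV : V.IsHermitian) (hW : W.IsHermitian)
    (hker : ∀ y, W *ᵥ y = 0 → V *ᵥ y = 0) :
    LivesOn V (LinearMap.range (toEuclideanLin W)) := by
  have hVs : (toEuclideanLin V).IsSymmetric := (isHermitian_iff_isSymmetric).mp hV
  have hWs : (toEuclideanLin W).IsSymmetric := (isHermitian_iff_isSymmetric).mp hW
  have horth : (LinearMap.range (toEuclideanLin W))ᗮ ≤ (LinearMap.range (toEuclideanLin V))ᗮ := by
    intro v hv
    rw [mem_orth_range_iff hWs, toEuclideanLin_eq_zero_iff] at hv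
    rw [mem_orth_range_iff hVs, toEuclideanLin_eq_zero_iff]
    exact hker _ hv
  constructor
  · intro v
    have : LinearMap.range (toEuclideanLin V) ≤ LinearMap.range (toEuclideanLin W) := by
      rw [← Submodule.orthogonal_orthogonal (LinearMap.range (toEuclideanLin V)),
        ← Submodule.orthogonal_orthogonal (LinearMap.range (toEuclideanLin W))]
      exact Submodule.orthogonal_le horth
    exact this ⟨v, rfl⟩
  · intro v hv
    rw [toEuclideanLin_eq_zero_iff]
    rw [mem_orth_range_iff hWs, toEuclideanLin_eq_zero_iff] at hv
    exact hker _ hv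

lemma livesOn_sub {A B : Matrix (Fin N) (Fin N) ℂ} {M : Submodule ℂ E}
    (hA : LivesOn A M) (hB : LivesOn B M) : LivesOn (A - B) M := by
  constructor
  · intro v
    rw [map_sub, LinearMap.sub_apply]
    exact M.sub_mem (hA.1 v) (hB.1 v)
  · intro v hv
    rw [map_sub, LinearMap.sub_apply, hA.2 v hv, hB.2 v hv, sub_zero]

variable {X : Type*} [TopologicalSpace X] [T2Space X] [MeasurableSpace X] [BorelSpace X]
variable {n : ℕ}

omit [TopologicalSpace X] [T2Space X] [BorelSpace X] in
lemma vm_biUnion (ν : VectorMeasure X (Matrix (Fin N) (Fin N) ℂ))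
    (F : Finset (Fin n)) (f : Fin n → Set X) (hm : ∀ k, MeasurableSet (f k))
    (hd : ∀ i j, i ≠ j → Disjoint (f i) (f j)) :
    ν (⋃ k ∈ F, f k) = ∑ k ∈ F, ν (f k) := by
  classical
  induction F using Finset.induction_on with
  | empty => simp
  | @insert a F ha ih =>
    rw [Finset.set_biUnion_insert, VectorMeasure.of_union, ih, Finset.sum_insert ha]
    · rw [Set.disjoint_iUnion_right]
      intro i
      rw [Set.disjoint_iUnion_right]
      intro hi
      exact hd a i (fun h => ha (h ▸ hi))
    · exact hm a
    · exact MeasurableSet.biUnion F.countable_toSet (fun k _ => hm k)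

lemma vm_eq_sum (ν : VectorMeasure X (Matrix (Fin N) (Fin N) ℂ)) (x : Fin n → X)
    (hx : Function.Injective x)
    (h0 : ∀ s, MeasurableSet s → (∀ k, x k ∉ s) → ν s = 0)
    (s : Set X) (hs : MeasurableSet s) :
    ν s = ∑ k ∈ Finset.univ.filter (fun k => x k ∈ s), ν {x k} := by
  classical
  have hFm : MeasurableSet (Set.range x) := (Set.finite_range x).measurableSet
  have hsplit : s = (s ∩ Set.range x) ∪ (s \ Set.range x) := by
    simp [Set.inter_union_diff]
  have h1 : ν s = ν (s ∩ Set.range x) + ν (s \ Set.range x) := by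
    conv_lhs => rw [hsplit]
    exact VectorMeasure.of_union (Set.disjoint_sdiff_right.mono_left Set.inter_subset_right)
      (hs.inter hFm) (hs.diff hFm)
  have h2 : ν (s \ Set.range x) = 0 := by
    apply h0 _ (hs.diff hFm)
    intro k hk
    exact hk.2 ⟨k, rfl⟩
  have h3 : s ∩ Set.range x = ⋃ k ∈ Finset.univ.filter (fun k => x k ∈ s), {x k} := by
    ext y
    simp only [Set.mem_inter_iff, Set.mem_range, Set.mem_iUnion, Finset.mem_filter,
      Finset.mem_univ, true_and, Set.mem_singleton_iff]
    constructor
    · rintro ⟨hy, k, rfl⟩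
      exact ⟨k, hy, rfl⟩
    · rintro ⟨k, hk, rfl⟩
      exact ⟨hk, k, rfl⟩
  rw [h1, h2, add_zero, h3, vm_biUnion]
  · exact fun k => measurableSet_singleton _
  · intro i j hij
    rw [Set.disjoint_singleton]
    exact fun h => hij (hx h)

end Stmt7Aux

/-- If `W₁,…,Wₙ` are PSD matrices summing to `I` with `{Ran Wₖ}` weakly independent and
`x₁,…,xₙ` distinct, then `μ = Σₖ Wₖ δ_{xₖ}` is an extreme point of the convex set of positive
matrix measures `ν` with `ν(X) = I`. -/
theorem stmt7 {X : Type*} [TopologicalSpace X] [CompactSpace X] [T2Space X]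
    [MeasurableSpace X] [BorelSpace X] {N n : ℕ}
    (W : Fin n → Matrix (Fin N) (Fin N) ℂ)
    (hW : ∀ k, (W k).PosSemidef) (hsum : ∑ k, W k = 1)
    (hwi : WeaklyIndependent (fun k => LinearMap.range (Matrix.toEuclideanLin (W k))))
    (x : Fin n → X) (hx : Function.Injective x)
    (C : Set (VectorMeasure X (Matrix (Fin N) (Fin N) ℂ)))
    (hC : C = {ν | (∀ s, MeasurableSet s → (ν s).PosSemidef) ∧ ν Set.univ = 1})
    (μ : VectorMeasure X (Matrix (Fin N) (Fin N) ℂ))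
    (hμ : ∀ s, MeasurableSet s →
      μ s = ∑ k ∈ Finset.univ.filter (fun k => x k ∈ s), W k) :
    μ ∈ C ∧ ∀ μ₁ ∈ C, ∀ μ₂ ∈ C, ∀ t : ℝ, 0 < t → t < 1 →
      (∀ s : Set X, MeasurableSet s → μ s = t • μ₁ s + (1 - t) • μ₂ s) →
      μ₁ = μ ∧ μ₂ = μ := by
  open Stmt7Aux in
  subst hC
  constructor
  · constructor
    · intro s hs
      rw [hμ s hs]
      exact Finset.sum_induction _ _ (fun a b ha hb => ha.add hb) Matrix.PosSemidef.zero
        (fun k _ => hW k)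
    · rw [hμ _ MeasurableSet.univ]
      simpa using hsum
  · intro μ₁ hμ₁ μ₂ hμ₂ t ht0 ht1 hmix
    obtain ⟨h₁pos, h₁tot⟩ := hμ₁
    obtain ⟨h₂pos, h₂tot⟩ := hμ₂
    have ht1' : (0 : ℝ) < 1 - t := by linarith
    -- both μ₁ and μ₂ vanish on measurable sets missing all the points
    have key : ∀ s, MeasurableSet s → (∀ k, x k ∉ s) → μ₁ s = 0 ∧ μ₂ s = 0 := by
      intro s hs hmiss
      have hz : t • μ₁ s + (1 - t) • μ₂ s = 0 := by
        rw [← hmix s hs, hμ s hs, Finset.filter_false_of_mem (fun k _ => hmiss k),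
          Finset.sum_empty]
      have hA : (t • μ₁ s).PosSemidef := Stmt7Aux.psd_real_smul ht0.le (h₁pos s hs)
      have hB : ((1 - t) • μ₂ s).PosSemidef := Stmt7Aux.psd_real_smul ht1'.le (h₂pos s hs)
      exact ⟨Stmt7Aux.real_smul_cancel ht0.ne' (Stmt7Aux.psd_add_eq_zero hA hB hz),
        Stmt7Aux.real_smul_cancel ht1'.ne'
          (Stmt7Aux.psd_add_eq_zero hB hA (by rw [add_comm]; exact hz))⟩
    have hf1 := Stmt7Aux.vm_eq_sum μ₁ x hx (fun s hs h => (key s hs h).1)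
    have hf2 := Stmt7Aux.vm_eq_sum μ₂ x hx (fun s hs h => (key s hs h).2)
    have msing : ∀ k, MeasurableSet ({x k} : Set X) := fun k => measurableSet_singleton _
    have hμsing : ∀ k, μ {x k} = W k := by
      intro k
      rw [hμ _ (msing k)]
      have hfil : Finset.univ.filter (fun j => x j ∈ ({x k} : Set X)) = {k} := by
        ext j
        simp [Set.mem_singleton_iff, hx.eq_iff]
      convert Finset.sum_singleton W k using 2
      convert hfil
    set V : Fin n → Matrix (Fin N) (Fin N) ℂ := fun k => μ₁ {x k} with hVdef
    set U : Fin n → Matrix (Fin N) (Fin N) ℂ := fun k => μ₂ {x k} with hUdef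
    have hmixk : ∀ k, W k = t • V k + (1 - t) • U k := by
      intro k
      rw [← hμsing k]
      exact hmix _ (msing k)
    have hVpsd : ∀ k, (V k).PosSemidef := fun k => h₁pos _ (msing k)
    have hUpsd : ∀ k, (U k).PosSemidef := fun k => h₂pos _ (msing k)
    have hVsum : ∑ k, V k = 1 := by
      have := hf1 Set.univ MeasurableSet.univ
      rw [h₁tot] at this
      simpa using this.symm
    have hUsum : ∑ k, U k = 1 := by
      have := hf2 Set.univ MeasurableSet.univ
      rw [h₂tot] at this
      simpa using this.symm
    have hkerV : ∀ k y, W k *ᵥ y = 0 → V k *ᵥ y = 0 := by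
      intro k y hy
      exact Stmt7Aux.real_smul_mulVec_zero ht0.ne'
        (Stmt7Aux.ker_of_combo (Stmt7Aux.psd_real_smul ht0.le (hVpsd k))
          (Stmt7Aux.psd_real_smul ht1'.le (hUpsd k)) (hmixk k) hy)
    have hkerU : ∀ k y, W k *ᵥ y = 0 → U k *ᵥ y = 0 := by
      intro k y hy
      exact Stmt7Aux.real_smul_mulVec_zero ht1'.ne'
        (Stmt7Aux.ker_of_combo (Stmt7Aux.psd_real_smul ht1'.le (hUpsd k))
          (Stmt7Aux.psd_real_smul ht0.le (hVpsd k)) (by rw [hmixk k, add_comm]) hy)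
    have hWlives : ∀ k, LivesOn (W k) (LinearMap.range (Matrix.toEuclideanLin (W k))) :=
      fun k => Stmt7Aux.livesOn_of (hW k).1 (hW k).1 (fun _ h => h)
    have hVeq : ∀ k, V k = W k := by
      intro k
      have := hwi (fun k => W k - V k)
        (fun k => Stmt7Aux.livesOn_sub (hWlives k)
          (Stmt7Aux.livesOn_of (hVpsd k).1 (hW k).1 (hkerV k)))
        (by rw [Finset.sum_sub_distrib, hsum, hVsum, sub_self]) k
      exact (sub_eq_zero.mp this).symm
    have hUeq : ∀ k, U k = W k := by
      intro k
      have := hwi (fun k => W k - U k)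
        (fun k => Stmt7Aux.livesOn_sub (hWlives k)
          (Stmt7Aux.livesOn_of (hUpsd k).1 (hW k).1 (hkerU k)))
        (by rw [Finset.sum_sub_distrib, hsum, hUsum, sub_self]) k
      exact (sub_eq_zero.mp this).symm
    constructor
    · apply VectorMeasure.ext
      intro s hs
      rw [hf1 s hs, hμ s hs]
      exact Finset.sum_congr rfl (fun k _ => hVeq k)
    · apply VectorMeasure.ext
      intro s hs
      rw [hf2 s hs, hμ s hs]
      exact Finset.sum_congr rfl (fun k _ => hUeq k)
end

section
/- There exist three vectors ξ₁, ξ₂, ξ₃ in ℂ², pairwise linearly independent, such that the rank-one matrices Wⱼ = ξⱼξⱼ* satisfy W₁ + W₂ + W₃ = I₂ and the family of one-dimensional subspaces {span ξ₁, span ξ₂, span ξ₃} is weakly independent. -/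
lemma euclid_apply (T : Matrix (Fin 2) (Fin 2) ℂ) (v : EuclideanSpace ℂ (Fin 2)) (i : Fin 2) :
    (Matrix.toEuclideanLin T v) i = T i 0 * v 0 + T i 1 * v 1 := by
  show T.mulVec v i = _
  simp [Matrix.mulVec, dotProduct, Fin.sum_univ_two]

lemma pairind (x0 x1 y0 y1 : ℂ) (hdet : x0*y1 - x1*y0 ≠ 0) :
    LinearIndependent ℂ ![(!₂[x0,x1] : EuclideanSpace ℂ (Fin 2)), !₂[y0,y1]] := by
  rw [LinearIndependent.pair_iff]
  intro s t h
  have h0 : s * x0 + t * y0 = 0 := by simpa using congrArg (fun v : EuclideanSpace ℂ (Fin 2) => v 0) h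
  have h1 : s * x1 + t * y1 = 0 := by simpa using congrArg (fun v : EuclideanSpace ℂ (Fin 2) => v 1) h
  constructor
  · have : s * (x0*y1 - x1*y0) = 0 := by linear_combination y1*h0 - y0*h1
    exact (mul_eq_zero.1 this).resolve_right hdet
  · have : t * (x0*y1 - x1*y0) = 0 := by linear_combination x0*h1 - x1*h0
    exact (mul_eq_zero.1 this).resolve_right hdet

lemma key (x y : ℂ) (hx : x ≠ 0) (hsx : star x = x) (hsy : star y = y)
    (T : Matrix (Fin 2) (Fin 2) ℂ)
    (h : LivesOn T (Submodule.span ℂ {(!₂[x,y] : EuclideanSpace ℂ (Fin 2))})) :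
    ∃ p q : ℂ, T 0 0 = p * x ∧ T 1 0 = p * y ∧ T 0 1 = q * x ∧ T 1 1 = q * y ∧
      q * x = p * y := by
  obtain ⟨p, hp⟩ := Submodule.mem_span_singleton.1 (h.1 (EuclideanSpace.single 0 1))
  obtain ⟨q, hq⟩ := Submodule.mem_span_singleton.1 (h.1 (EuclideanSpace.single 1 1))
  have hp0 : T 0 0 = p * x := by
    have := congrArg (fun v : EuclideanSpace ℂ (Fin 2) => v 0) hp
    rw [euclid_apply] at this
    simpa [EuclideanSpace.single_apply] using this.symm
  have hp1 : T 1 0 = p * y := by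
    have := congrArg (fun v : EuclideanSpace ℂ (Fin 2) => v 1) hp
    rw [euclid_apply] at this
    simpa [EuclideanSpace.single_apply] using this.symm
  have hq0 : T 0 1 = q * x := by
    have := congrArg (fun v : EuclideanSpace ℂ (Fin 2) => v 0) hq
    rw [euclid_apply] at this
    simpa [EuclideanSpace.single_apply] using this.symm
  have hq1 : T 1 1 = q * y := by
    have := congrArg (fun v : EuclideanSpace ℂ (Fin 2) => v 1) hq
    rw [euclid_apply] at this
    simpa [EuclideanSpace.single_apply] using this.symm
  refine ⟨p, q, hp0, hp1, hq0, hq1, ?_⟩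
  have hinner : (@inner ℂ (EuclideanSpace ℂ (Fin 2)) _ !₂[x,y] !₂[-y,x]) = 0 := by
    simp only [PiLp.inner_apply, RCLike.inner_apply, Fin.sum_univ_two, starRingEnd_apply, Matrix.cons_val_zero,
      Matrix.cons_val_one, Matrix.head_cons, hsx, hsy, PiLp.toLp_apply]
    ring
  have hv := Submodule.mem_orthogonal_singleton_iff_inner_right.2 hinner
  have hz := h.2 _ hv
  have h0 : T 0 0 * (-y) + T 0 1 * x = 0 := by
    have := congrArg (fun v : EuclideanSpace ℂ (Fin 2) => v 0) hz
    rw [euclid_apply] at this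
    simpa using this
  have hxz : x * (q * x - p * y) = 0 := by linear_combination h0 + y * hp0 - x * hq0
  have := (mul_eq_zero.1 hxz).resolve_left hx
  linear_combination this

/-- There exist three pairwise linearly independent vectors `ξ₁, ξ₂, ξ₃` in `ℂ²` such that the
rank-one matrices `Wⱼ = ξⱼξⱼ*` sum to `I₂` and the spans `{span ξ₁, span ξ₂, span ξ₃}` form a
weakly independent family of subspaces. -/
theorem stmt11 :
    ∃ ξ : Fin 3 → EuclideanSpace ℂ (Fin 2),
      (∀ i j, i ≠ j → LinearIndependent ℂ ![ξ i, ξ j]) ∧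
      (∑ j, Matrix.of (fun a b : Fin 2 => ξ j a * star (ξ j b))) = 1 ∧
      WeaklyIndependent (fun j => Submodule.span ℂ {ξ j}) := by
  refine ⟨![!₂[2/3, 2/3], !₂[2/3, -(1/3)], !₂[-(1/3), 2/3]], ?_, ?_, ?_⟩
  · intro i j hij
    fin_cases i <;> fin_cases j <;>
      first
        | exact absurd rfl hij
        | exact pairind _ _ _ _ (by norm_num)
  · ext i k
    fin_cases i <;> fin_cases k <;>
      norm_num [Fin.sum_univ_three, Matrix.sum_apply, Matrix.one_apply, map_ofNat, Matrix.cons_val_two]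
  · intro T hT hsum j
    obtain ⟨p₀, q₀, h₀00, h₀10, h₀01, h₀11, hr₀⟩ :=
      key (2/3) (2/3) (by norm_num) (by norm_num) (by norm_num) (T 0) (hT 0)
    obtain ⟨p₁, q₁, h₁00, h₁10, h₁01, h₁11, hr₁⟩ :=
      key (2/3) (-(1/3)) (by norm_num) (by norm_num) (by norm_num) (T 1) (hT 1)
    obtain ⟨p₂, q₂, h₂00, h₂10, h₂01, h₂11, hr₂⟩ :=
      key (-(1/3)) (2/3) (by norm_num) (by norm_num) (by norm_num) (T 2) (hT 2)
    have E : ∀ i k, T 0 i k + T 1 i k + T 2 i k = 0 := by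
      intro i k
      have := congrFun (congrFun hsum i) k
      simpa [Fin.sum_univ_three, Matrix.sum_apply] using this
    have E1 := E 0 0; rw [h₀00, h₁00, h₂00] at E1
    have E2 := E 0 1; rw [h₀01, h₁01, h₂01] at E2
    have E3 := E 1 0; rw [h₀10, h₁10, h₂10] at E3
    have E4 := E 1 1; rw [h₀11, h₁11, h₂11] at E4
    have hp0 : p₀ = 0 := by
      linear_combination (1/3)*E1 + (2/3)*E2 + (1/6)*E3 + (1/3)*E4 - hr₀ - (1/2)*hr₁
    have hp1 : p₁ = 0 := by
      linear_combination (4/3)*E1 - (4/3)*E2 + (2/3)*E3 - (2/3)*E4 + 2*hr₀ + hr₁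
    have hp2 : p₂ = 0 := by
      linear_combination (1/3)*E1 - (4/3)*E2 + (5/3)*E3 - (2/3)*E4 + 2*hr₀ + hr₁
    have hq0 : q₀ = 0 := by
      linear_combination (1/3)*E1 + (2/3)*E2 + (1/6)*E3 + (1/3)*E4 + (1/2)*hr₀ - (1/2)*hr₁
    have hq1 : q₁ = 0 := by
      linear_combination -(2/3)*E1 + (2/3)*E2 - (1/3)*E3 + (1/3)*E4 - hr₀ + hr₁
    have hq2 : q₂ = 0 := by
      linear_combination -(2/3)*E1 - (1/3)*E2 - (1/3)*E3 + (4/3)*E4 - hr₀ + hr₁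
    fin_cases j
    · ext i k
      fin_cases i <;> fin_cases k <;> simp [h₀00, h₀01, h₀10, h₀11, hp0, hq0]
    · ext i k
      fin_cases i <;> fin_cases k <;> simp [h₁00, h₁01, h₁10, h₁11, hp1, hq1]
    · ext i k
      fin_cases i <;> fin_cases k <;> simp [h₂00, h₂01, h₂10, h₂11, hp2, hq2]
end

section
/- If S is a holomorphic function on a domain R ⊆ ℂ with N×N matrix values satisfying ‖S(z)‖ < 1 for all z ∈ R and S(t₀) = 0 for a fixed t₀ ∈ R, then F(z) := (I - S(z))⁻¹(I + S(z)) is holomorphic on R, satisfies F(t₀) = I, and has positive real part: F(z) + F(z)* ≥ 0 for all z ∈ R. In fact F(z) + F(w)* = 2(I - S(z))⁻¹(I - S(z)S(w)*)(I - S(w)*)⁻¹ for all z, w ∈ R. -/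
open scoped Matrix.Norms.L2Operator ComplexOrder Matrix

/-- If `S` is holomorphic on a domain `R` with `‖S(z)‖ < 1` and `S(t₀) = 0`, then
`F = (I - S)⁻¹(I + S)` is holomorphic on `R`, `F(t₀) = I`, `F` has positive real part, and
`F(z) + F(w)* = 2 (I - S(z))⁻¹ (I - S(z)S(w)*) (I - S(w)*)⁻¹` on `R × R`. -/
theorem stmt12 {N : ℕ} (R : Set ℂ) (hR : IsOpen R) (hconn : IsConnected R)
    (t₀ : ℂ) (ht₀ : t₀ ∈ R)
    (S : ℂ → Matrix (Fin N) (Fin N) ℂ) (hS : DifferentiableOn ℂ S R)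
    (hcontr : ∀ z ∈ R, ‖S z‖ < 1) (hS0 : S t₀ = 0)
    (F : ℂ → Matrix (Fin N) (Fin N) ℂ) (hF : F = fun z => (1 - S z)⁻¹ * (1 + S z)) :
    DifferentiableOn ℂ F R ∧ F t₀ = 1 ∧
      (∀ z ∈ R, (F z + (F z)ᴴ).PosSemidef) ∧
      ∀ z ∈ R, ∀ w ∈ R,
        F z + (F w)ᴴ = (2:ℂ) • ((1 - S z)⁻¹ * (1 - S z * (S w)ᴴ) * (1 - (S w)ᴴ)⁻¹) := by
  haveI : CompleteSpace (Matrix (Fin N) (Fin N) ℂ) := FiniteDimensional.complete ℂ _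
  have hu : ∀ z ∈ R, IsUnit (1 - S z) := fun z hz => (Units.oneSub (S z) (hcontr z hz)).isUnit
  have hud : ∀ z ∈ R, IsUnit (1 - S z).det :=
    fun z hz => (Matrix.isUnit_iff_isUnit_det _).mp (hu z hz)
  have huH : ∀ z ∈ R, IsUnit (1 - (S z)ᴴ) := by
    intro z hz
    have h : ‖(S z)ᴴ‖ < 1 := by
      rw [Matrix.l2_opNorm_conjTranspose]; exact hcontr z hz
    exact (Units.oneSub _ h).isUnit
  have hudH : ∀ z ∈ R, IsUnit (1 - (S z)ᴴ).det :=
    fun z hz => (Matrix.isUnit_iff_isUnit_det _).mp (huH z hz)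
  -- main identity
  have key : ∀ z ∈ R, ∀ w ∈ R,
      F z + (F w)ᴴ = (2:ℂ) • ((1 - S z)⁻¹ * (1 - S z * (S w)ᴴ) * (1 - (S w)ᴴ)⁻¹) := by
    intro z hz w hw
    have hFz : F z = (1 - S z)⁻¹ * (1 + S z) := by rw [hF]
    have hFw : (F w)ᴴ = (1 + (S w)ᴴ) * (1 - (S w)ᴴ)⁻¹ := by
      rw [hF]
      simp only [Matrix.conjTranspose_mul, Matrix.conjTranspose_nonsing_inv,
        Matrix.conjTranspose_sub, Matrix.conjTranspose_add, Matrix.conjTranspose_one]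
    have expand : (1 + S z) * (1 - (S w)ᴴ) + (1 - S z) * (1 + (S w)ᴴ)
        = (2:ℂ) • (1 - S z * (S w)ᴴ) := by
      rw [two_smul]
      noncomm_ring
    have e1 : (1 - S z)⁻¹ * ((1 + S z) * (1 - (S w)ᴴ)) * (1 - (S w)ᴴ)⁻¹
        = (1 - S z)⁻¹ * (1 + S z) := by
      rw [mul_assoc ((1 - S z)⁻¹), mul_assoc (1 + S z),
        Matrix.mul_nonsing_inv _ (hudH w hw), mul_one]
    have e2 : (1 - S z)⁻¹ * ((1 - S z) * (1 + (S w)ᴴ)) * (1 - (S w)ᴴ)⁻¹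
        = (1 + (S w)ᴴ) * (1 - (S w)ᴴ)⁻¹ := by
      rw [← mul_assoc, Matrix.nonsing_inv_mul _ (hud z hz), one_mul]
    rw [hFz, hFw, ← e1, ← e2, ← add_mul, ← mul_add, expand, mul_smul_comm, smul_mul_assoc]
  -- positive semidefiniteness
  have hPSD : ∀ z ∈ R, (F z + (F z)ᴴ).PosSemidef := by
    intro z hz
    have hM : (1 - S z * (S z)ᴴ).PosSemidef := by
      refine Matrix.PosSemidef.of_dotProduct_mulVec_nonneg ?_ ?_
      · show _ = _
        simp only [Matrix.conjTranspose_sub, Matrix.conjTranspose_mul,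
          Matrix.conjTranspose_conjTranspose, Matrix.conjTranspose_one]
      · intro x
        set y : Fin N → ℂ := (S z)ᴴ *ᵥ x with hy
        have hstep : star x ⬝ᵥ ((1 - S z * (S z)ᴴ) *ᵥ x) = star x ⬝ᵥ x - star y ⬝ᵥ y := by
          rw [Matrix.sub_mulVec, dotProduct_sub, Matrix.one_mulVec]
          congr 1
          rw [← Matrix.mulVec_mulVec, Matrix.dotProduct_mulVec, hy, Matrix.star_mulVec,
            Matrix.conjTranspose_conjTranspose]
        rw [hstep]
        set X : EuclideanSpace ℂ (Fin N) := (WithLp.equiv 2 (Fin N → ℂ)).symm x with hX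
        set Y : EuclideanSpace ℂ (Fin N) := (WithLp.equiv 2 (Fin N → ℂ)).symm y with hY
        have hx2 : star x ⬝ᵥ x = ((‖X‖ ^ 2 : ℝ) : ℂ) := by
          have h := EuclideanSpace.inner_eq_star_dotProduct X X
          have h2 := inner_self_eq_norm_sq_to_K (𝕜 := ℂ) X
          rw [h] at h2
          simpa [hX, dotProduct_comm] using h2
        have hy2 : star y ⬝ᵥ y = ((‖Y‖ ^ 2 : ℝ) : ℂ) := by
          have h := EuclideanSpace.inner_eq_star_dotProduct Y Y
          have h2 := inner_self_eq_norm_sq_to_K (𝕜 := ℂ) Y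
          rw [h] at h2
          simpa [hY, dotProduct_comm] using h2
        have hYX : ‖Y‖ ≤ ‖X‖ := by
          have h1 : ‖Y‖ ≤ ‖(S z)ᴴ‖ * ‖X‖ := Matrix.l2_opNorm_mulVec ((S z)ᴴ) X
          have h2 : ‖(S z)ᴴ‖ * ‖X‖ ≤ 1 * ‖X‖ := by
            apply mul_le_mul_of_nonneg_right _ (norm_nonneg X)
            rw [Matrix.l2_opNorm_conjTranspose]
            exact (hcontr z hz).le
          linarith
        rw [hx2, hy2, ← Complex.ofReal_sub]
        rw [Complex.zero_le_real]
        have := pow_le_pow_left₀ (norm_nonneg Y) hYX 2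
        linarith
    have hBinv : (1 - (S z)ᴴ)⁻¹ = ((1 - S z)⁻¹)ᴴ := by
      rw [Matrix.conjTranspose_nonsing_inv]
      congr 1
      simp only [Matrix.conjTranspose_sub, Matrix.conjTranspose_one]
    rw [key z hz z hz, hBinv]
    rw [show ((2:ℂ) • ((1 - S z)⁻¹ * (1 - S z * (S z)ᴴ) * ((1 - S z)⁻¹)ᴴ))
        = ((1 - S z)⁻¹ * (1 - S z * (S z)ᴴ) * ((1 - S z)⁻¹)ᴴ)
          + ((1 - S z)⁻¹ * (1 - S z * (S z)ᴴ) * ((1 - S z)⁻¹)ᴴ) from two_smul ℂ _]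
    exact (hM.mul_mul_conjTranspose_same _).add (hM.mul_mul_conjTranspose_same _)
  -- differentiability
  have hdiff : DifferentiableOn ℂ F R := by
    have h1 : DifferentiableOn ℂ (fun z => (1 : Matrix (Fin N) (Fin N) ℂ) - S z) R :=
      (differentiableOn_const _).sub hS
    have hinv : DifferentiableOn ℂ (fun z => (1 - S z)⁻¹) R := by
      intro z hz
      have h2 := (differentiableAt_inverse (𝕜 := ℂ) (hu z hz)).comp_differentiableWithinAt
        z (h1 z hz)
      exact h2.congr (fun y _ => (Matrix.nonsing_inv_eq_ringInverse _))
        (Matrix.nonsing_inv_eq_ringInverse _)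
    rw [hF]
    exact hinv.mul ((differentiableOn_const _).add hS)
  refine ⟨hdiff, ?_, hPSD, key⟩
  rw [hF]
  simp [hS0, inv_one]
end

section
/- Let W be an N×N complex matrix with ‖W‖ < 1 and define the linear-fractional map L_W(Z) = [D_{W*}⁻¹ Z - D_{W*}⁻¹ W][ -W* D_{W*}⁻¹ Z + D_W⁻¹]⁻¹. Then L_W maps the open unit ball {Z : ‖Z‖ < 1} of N×N matrices into itself and L_W(W) = 0. -/
set_option maxHeartbeats 1000000

open scoped Matrix.Norms.L2Operator ComplexOrder Matrix

namespace Stmt16Aux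

open Matrix

variable {N : ℕ}

private lemma dot_star_self (v : Fin N → ℂ) :
    star v ⬝ᵥ v = ((‖(WithLp.equiv 2 (Fin N → ℂ)).symm v‖ : ℂ) ^ 2) := by
  rw [WithLp.equiv_symm_apply, dotProduct_comm, ← EuclideanSpace.inner_toLp_toLp,
    inner_self_eq_norm_sq_to_K]; norm_cast

private lemma quad (M : Matrix (Fin N) (Fin N) ℂ) (x : Fin N → ℂ) :
    star x ⬝ᵥ ((1 - Mᴴ * M) *ᵥ x)
      = ((‖(WithLp.equiv 2 (Fin N → ℂ)).symm x‖ : ℂ) ^ 2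
          - (‖(WithLp.equiv 2 (Fin N → ℂ)).symm (M *ᵥ x)‖ : ℂ) ^ 2) := by
  rw [sub_mulVec, dotProduct_sub, one_mulVec, dot_star_self, ← mulVec_mulVec,
    dotProduct_mulVec, ← star_mulVec, dot_star_self]

private lemma herm_one_sub (M : Matrix (Fin N) (Fin N) ℂ) : (1 - Mᴴ * M).IsHermitian := by
  unfold Matrix.IsHermitian
  simp [Matrix.conjTranspose_sub, Matrix.conjTranspose_mul]

lemma posDef_one_sub {M : Matrix (Fin N) (Fin N) ℂ} (h : ‖M‖ < 1) :
    (1 - Mᴴ * M).PosDef := by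
  refine PosDef.of_dotProduct_mulVec_pos (herm_one_sub M) fun x hx => ?_
  rw [quad]
  set a := ‖(WithLp.equiv 2 (Fin N → ℂ)).symm x‖ with ha
  set b := ‖(WithLp.equiv 2 (Fin N → ℂ)).symm (M *ᵥ x)‖ with hb
  have hab : b ≤ ‖M‖ * a := M.l2_opNorm_mulVec ((WithLp.equiv 2 (Fin N → ℂ)).symm x)
  have ha0 : 0 < a := by
    rw [norm_pos_iff]
    simpa using hx
  have hba : b < a := lt_of_le_of_lt hab (by nlinarith [norm_nonneg M])
  have : ((a : ℂ) ^ 2 - (b : ℂ) ^ 2) = (((a ^ 2 - b ^ 2 : ℝ)) : ℂ) := by push_cast; ring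
  rw [this, Complex.zero_lt_real]
  nlinarith [norm_nonneg ((WithLp.equiv 2 (Fin N → ℂ)).symm (M *ᵥ x))]

lemma norm_lt_one {M : Matrix (Fin N) (Fin N) ℂ} (h : (1 - Mᴴ * M).PosDef) :
    ‖M‖ < 1 := by
  have key : ∀ x : EuclideanSpace ℂ (Fin N), x ≠ 0 →
      ‖toEuclideanLin M x‖ < ‖x‖ := by
    intro x hx
    have h2 := h.dotProduct_mulVec_pos (x := WithLp.equiv 2 (Fin N → ℂ) x) (by simpa using hx)
    rw [quad] at h2
    have : ∀ y : EuclideanSpace ℂ (Fin N),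
        (WithLp.equiv 2 (Fin N → ℂ)).symm ((WithLp.equiv 2 (Fin N → ℂ)) y) = y := fun y => rfl
    rw [toEuclideanLin_apply]
    change ‖(WithLp.equiv 2 (Fin N → ℂ)).symm (M *ᵥ (WithLp.equiv 2 (Fin N → ℂ)) x)‖ < ‖x‖
    set a := ‖x‖
    set b := ‖(WithLp.equiv 2 (Fin N → ℂ)).symm (M *ᵥ (WithLp.equiv 2 (Fin N → ℂ)) x)‖
    have e : ((a : ℂ) ^ 2 - (b : ℂ) ^ 2) = (((a ^ 2 - b ^ 2 : ℝ)) : ℂ) := by push_cast; ring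
    rw [this x, e, Complex.zero_lt_real] at h2
    nlinarith [norm_nonneg x,
      norm_nonneg ((WithLp.equiv 2 (Fin N → ℂ)).symm (M *ᵥ (WithLp.equiv 2 (Fin N → ℂ)) x))]
  rcases eq_or_ne M 0 with rfl | hM0
  · simpa using one_pos
  · rw [l2_opNorm_def]
    set f := (Matrix.toEuclideanLin.trans LinearMap.toContinuousLinearMap) M with hfdef
    have hfx : ∀ x, f x = toEuclideanLin M x := fun _ => rfl
    obtain ⟨x, hx⟩ : ∃ x : EuclideanSpace ℂ (Fin N), toEuclideanLin M x ≠ 0 := by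
      by_contra hc
      push_neg at hc
      exact hM0 (Matrix.toEuclideanLin.map_eq_zero_iff.mp (LinearMap.ext fun z => hc z))
    have hxne : x ≠ 0 := fun h => hx (by simp [h])
    have hxnorm : ‖x‖ ≠ 0 := norm_ne_zero_iff.mpr hxne
    set S := Metric.sphere (0 : EuclideanSpace ℂ (Fin N)) 1 with hS
    have hyS : ((‖x‖⁻¹ : ℝ) : ℂ) • x ∈ S := by
      simp [hS, norm_smul, inv_mul_cancel₀ hxnorm]
    obtain ⟨x₀, hx₀, hmax⟩ := (isCompact_sphere (0 : EuclideanSpace ℂ (Fin N)) 1).exists_isMaxOn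
      ⟨_, hyS⟩ f.continuous.norm.continuousOn
    have hx₀1 : ‖x₀‖ = 1 := by simpa [hS] using hx₀
    have hx₀ne : x₀ ≠ 0 := by
      intro h; rw [h] at hx₀1; simp at hx₀1
    have hm : ‖f x₀‖ < 1 := by
      have := key x₀ hx₀ne
      rw [hfx, hx₀1] at *
      exact this
    refine lt_of_le_of_lt (f.opNorm_le_bound (norm_nonneg _) fun z => ?_) hm
    rcases eq_or_ne z 0 with rfl | hz
    · simp
    · have hzn : ‖z‖ ≠ 0 := norm_ne_zero_iff.mpr hz
      have hzS : ((‖z‖⁻¹ : ℝ) : ℂ) • z ∈ S := by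
        simp [hS, norm_smul, inv_mul_cancel₀ hzn]
      have := hmax hzS
      simp only [Set.mem_setOf_eq, _root_.map_smul, norm_smul] at this
      simp only [Complex.norm_real, norm_inv, norm_norm, Real.norm_eq_abs,
        abs_of_nonneg (norm_nonneg z)] at this
      calc ‖f z‖ = ‖z‖ * (‖z‖⁻¹ * ‖f z‖) := by field_simp
        _ ≤ ‖z‖ * ‖f x₀‖ := by
            have := mul_le_mul_of_nonneg_left this (norm_nonneg z)
            linarith [this]
        _ = ‖f x₀‖ * ‖z‖ := mul_comm _ _

open scoped MatrixOrder in
lemma intertwine_sqrt {n : Type*} [Fintype n] [DecidableEq n]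
    {A B X : Matrix n n ℂ} (hA : A.PosSemidef) (hB : B.PosSemidef)
    (h : X * A = B * X) : X * CFC.sqrt A = CFC.sqrt B * X := by
  set U : Matrix n n ℂ := hA.1.eigenvectorUnitary.1 with hU
  set V : Matrix n n ℂ := hB.1.eigenvectorUnitary.1 with hV
  set a := hA.1.eigenvalues with haev
  set b := hB.1.eigenvalues with hbev
  have hUU : (star U) * U = 1 := Matrix.mem_unitaryGroup_iff'.mp (hA.1.eigenvectorUnitary).2
  have hUU' : U * star U = 1 := Matrix.mem_unitaryGroup_iff.mp (hA.1.eigenvectorUnitary).2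
  have hVV : (star V) * V = 1 := Matrix.mem_unitaryGroup_iff'.mp (hB.1.eigenvectorUnitary).2
  have hVV' : V * star V = 1 := Matrix.mem_unitaryGroup_iff.mp (hB.1.eigenvectorUnitary).2
  have hAspec : A = U * diagonal (RCLike.ofReal ∘ a) * star U := hA.1.spectral_theorem
  have hBspec : B = V * diagonal (RCLike.ofReal ∘ b) * star V := hB.1.spectral_theorem
  set Y := star V * X * U with hY
  have hAU : A * U = U * diagonal (RCLike.ofReal ∘ a) := by
    rw [hAspec]
    simp [Matrix.mul_assoc, hUU]
  have hVB : star V * B = diagonal (RCLike.ofReal ∘ b) * star V := by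
    rw [hBspec]
    simp [← Matrix.mul_assoc, hVV]
  have hYd : Y * diagonal (RCLike.ofReal ∘ a) = diagonal (RCLike.ofReal ∘ b) * Y := by
    calc Y * diagonal (RCLike.ofReal ∘ a) = star V * X * (A * U) := by
          rw [hAU, hY]; noncomm_ring
      _ = star V * B * (X * U) := by
          rw [Matrix.mul_assoc, ← Matrix.mul_assoc X A U, h]
          noncomm_ring
      _ = diagonal (RCLike.ofReal ∘ b) * Y := by
          rw [hVB, hY]
          noncomm_ring
  have hent : ∀ i j, Y i j * (Real.sqrt (a j) : ℂ) = (Real.sqrt (b i) : ℂ) * Y i j := by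
    intro i j
    rcases eq_or_ne (Y i j) 0 with h0 | h0
    · simp [h0]
    · have h1 : ((a j : ℝ) : ℂ) * Y i j = ((b i : ℝ) : ℂ) * Y i j := by
        have := congrFun (congrFun hYd i) j
        simp only [Matrix.mul_diagonal, Matrix.diagonal_mul, Function.comp_apply] at this
        rw [mul_comm]; exact this
      have h2 : ((a j : ℝ) : ℂ) = ((b i : ℝ) : ℂ) :=
        mul_right_cancel₀ h0 (by linear_combination h1)
      have h3 : a j = b i := by exact_mod_cast h2
      rw [h3, mul_comm]
  have hYsd : Y * diagonal ((↑) ∘ Real.sqrt ∘ a) = diagonal ((↑) ∘ Real.sqrt ∘ b) * Y := by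
    ext i j
    simp only [Matrix.mul_diagonal, Matrix.diagonal_mul, Function.comp_apply]
    exact hent i j
  have hXU : X * U = V * Y := by
    rw [hY, ← Matrix.mul_assoc, ← Matrix.mul_assoc, hVV', Matrix.one_mul]
  have hsA : CFC.sqrt A = U * diagonal ((↑) ∘ Real.sqrt ∘ a) * star U := by
    rw [CFC.sqrt_eq_cfc, cfc_nnreal_eq_real _ A hA.nonneg, hA.1.cfc_eq, IsHermitian.cfc,
      Unitary.conjStarAlgAut_apply, show (fun x : ℝ => ((NNReal.sqrt x.toNNReal : ℝ))) = Real.sqrt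
        from funext fun x => (Real.sqrt.eq_1 x).symm]; rfl
  have hsB : CFC.sqrt B = V * diagonal ((↑) ∘ Real.sqrt ∘ b) * star V := by
    rw [CFC.sqrt_eq_cfc, cfc_nnreal_eq_real _ B hB.nonneg, hB.1.cfc_eq, IsHermitian.cfc,
      Unitary.conjStarAlgAut_apply, show (fun x : ℝ => ((NNReal.sqrt x.toNNReal : ℝ))) = Real.sqrt
        from funext fun x => (Real.sqrt.eq_1 x).symm]; rfl
  calc X * CFC.sqrt A = (X * U) * diagonal ((↑) ∘ Real.sqrt ∘ a) * star U := by
        rw [hsA]; noncomm_ring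
    _ = V * (Y * diagonal ((↑) ∘ Real.sqrt ∘ a)) * star U := by rw [hXU]; noncomm_ring
    _ = V * (diagonal ((↑) ∘ Real.sqrt ∘ b) * Y) * star U := by rw [hYsd]
    _ = V * diagonal ((↑) ∘ Real.sqrt ∘ b) * (star V * X) * (U * star U) := by
        rw [hY]; noncomm_ring
    _ = CFC.sqrt B * X := by rw [hUU', hsB]; noncomm_ring

lemma posDef_conj {n : Type*} [Fintype n] [DecidableEq n]
    {P R R' : Matrix n n ℂ} (hP : P.PosDef) (hR : R' * R = 1) :
    (Rᴴ * P * R).PosDef := by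
  refine PosDef.of_dotProduct_mulVec_pos ?_ ?_
  · unfold Matrix.IsHermitian
    simp [conjTranspose_mul, hP.1.eq, Matrix.mul_assoc]
  · intro x hx
    have hv : (Rᴴ * P * R) *ᵥ x = Rᴴ *ᵥ (P *ᵥ (R *ᵥ x)) := by
      simp [← mulVec_mulVec, Matrix.mul_assoc]
    rw [hv, dotProduct_mulVec, ← star_mulVec]
    refine hP.dotProduct_mulVec_pos (x := R *ᵥ x) fun h0 => hx ?_
    have : (R' * R) *ᵥ x = R' *ᵥ (R *ᵥ x) := by rw [← mulVec_mulVec]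
    rw [hR, h0, mulVec_zero, one_mulVec] at this
    exact this

end Stmt16Aux

open Matrix Stmt16Aux in
/-- For `‖W‖ < 1`, the linear-fractional map `L_W(Z) = (AZ + B)(CZ + D)⁻¹` with
`A = D_{W*}⁻¹`, `B = -D_{W*}⁻¹W`, `C = -W*D_{W*}⁻¹`, `D = D_W⁻¹` maps the open unit ball of
`N×N` matrices into itself and sends `W` to `0`. -/
theorem stmt16 {N : ℕ} (W DW DWs : Matrix (Fin N) (Fin N) ℂ) (hW : ‖W‖ < 1)
    (hDWpos : DW.PosSemidef) (hDW : DW * DW = 1 - Wᴴ * W)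
    (hDWspos : DWs.PosSemidef) (hDWs : DWs * DWs = 1 - W * Wᴴ)
    (L : Matrix (Fin N) (Fin N) ℂ → Matrix (Fin N) (Fin N) ℂ)
    (hL : L = fun Z => (DWs⁻¹ * Z + (-(DWs⁻¹ * W))) * ((-(Wᴴ * DWs⁻¹)) * Z + DW⁻¹)⁻¹) :
    (∀ Z, ‖Z‖ < 1 → ‖L Z‖ < 1) ∧ L W = 0 := by
  have hDWherm : DWᴴ = DW := hDWpos.1
  have hDWsherm : DWsᴴ = DWs := hDWspos.1
  have hLW : L W = 0 := by
    simp only [hL, add_neg_cancel, Matrix.zero_mul]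
  refine ⟨?_, hLW⟩
  intro Z hZ
  -- positive definiteness of 1 - WᴴW and 1 - WWᴴ
  have hP : (1 - Wᴴ * W).PosDef := posDef_one_sub hW
  have hQ : (1 - W * Wᴴ).PosDef := by
    have := posDef_one_sub (M := Wᴴ) (by rw [l2_opNorm_conjTranspose]; exact hW)
    simpa using this
  have hPdet : IsUnit (1 - Wᴴ * W).det := isUnit_iff_ne_zero.mpr hP.det_pos.ne'
  have hQdet : IsUnit (1 - W * Wᴴ).det := isUnit_iff_ne_zero.mpr hQ.det_pos.ne'
  -- DW, DWs invertible
  have hDWdet : IsUnit DW.det := by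
    refine isUnit_iff_ne_zero.mpr fun h0 => hP.det_pos.ne' ?_
    rw [← hDW, Matrix.det_mul, h0, mul_zero]
  have hDWsdet : IsUnit DWs.det := by
    refine isUnit_iff_ne_zero.mpr fun h0 => hQ.det_pos.ne' ?_
    rw [← hDWs, Matrix.det_mul, h0, mul_zero]
  have hDWi : DW⁻¹ * DW = 1 := Matrix.nonsing_inv_mul _ hDWdet
  have hDWi' : DW * DW⁻¹ = 1 := Matrix.mul_nonsing_inv _ hDWdet
  have hDWsi : DWs⁻¹ * DWs = 1 := Matrix.nonsing_inv_mul _ hDWsdet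
  have hDWsi' : DWs * DWs⁻¹ = 1 := Matrix.mul_nonsing_inv _ hDWsdet
  -- intertwining
  have hPps : (1 - Wᴴ * W).PosSemidef := hP.posSemidef
  have hQps : (1 - W * Wᴴ).PosSemidef := hQ.posSemidef
  open scoped MatrixOrder in
  have hDWsqrt : DW = CFC.sqrt (1 - Wᴴ * W) :=
    ((CFC.sqrt_eq_iff _ _ hPps.nonneg hDWpos.nonneg).mpr hDW).symm
  open scoped MatrixOrder in
  have hDWssqrt : DWs = CFC.sqrt (1 - W * Wᴴ) :=
    ((CFC.sqrt_eq_iff _ _ hQps.nonneg hDWspos.nonneg).mpr hDWs).symm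
  have hcomm : W * (1 - Wᴴ * W) = (1 - W * Wᴴ) * W := by noncomm_ring
  have hWDW : W * DW = DWs * W := by
    open scoped MatrixOrder in
    rw [hDWsqrt, hDWssqrt]; exact intertwine_sqrt hPps hQps hcomm
  have r1 : DWs⁻¹ * W = W * DW⁻¹ := by
    have e := congrArg (fun M => DWs⁻¹ * M * DW⁻¹) hWDW
    simp only [Matrix.mul_assoc, hDWi', Matrix.mul_one] at e
    rw [e, ← Matrix.mul_assoc, hDWsi, Matrix.one_mul]
  have r2 : Wᴴ * DWs⁻¹ = DW⁻¹ * Wᴴ := by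
    have e := congrArg Matrix.conjTranspose r1
    simpa [Matrix.conjTranspose_mul, Matrix.conjTranspose_nonsing_inv,
      hDWherm, hDWsherm] using e
  -- invertibility of 1 - WᴴZ
  have hSnorm : ‖Wᴴ * Z‖ < 1 := by
    have h1 : ‖Wᴴ * Z‖ ≤ ‖W‖ * ‖Z‖ := by
      rw [← l2_opNorm_conjTranspose W]; exact Matrix.l2_opNorm_mul _ _
    exact lt_of_le_of_lt (h1.trans (mul_le_of_le_one_right (norm_nonneg W) hZ.le)) hW
  have hSu : IsUnit (1 - Wᴴ * Z) := isUnit_one_sub_of_norm_lt_one hSnorm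
  have hSdet : IsUnit (1 - Wᴴ * Z).det := (Matrix.isUnit_iff_isUnit_det _).mp hSu
  have hSHdet : IsUnit (1 - Zᴴ * W).det := by
    have : (1 - Wᴴ * Z)ᴴ = 1 - Zᴴ * W := by
      simp [Matrix.conjTranspose_sub, Matrix.conjTranspose_mul]
    rw [← this, Matrix.det_conjTranspose]
    exact hSdet.star
  have cS : (1 - Wᴴ * Z)⁻¹ * (1 - Wᴴ * Z) = 1 := Matrix.nonsing_inv_mul _ hSdet
  have cS' : (1 - Wᴴ * Z) * (1 - Wᴴ * Z)⁻¹ = 1 := Matrix.mul_nonsing_inv _ hSdet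
  have cSH : (1 - Zᴴ * W)⁻¹ * (1 - Zᴴ * W) = 1 := Matrix.nonsing_inv_mul _ hSHdet
  have cSH' : (1 - Zᴴ * W) * (1 - Zᴴ * W)⁻¹ = 1 := Matrix.mul_nonsing_inv _ hSHdet
  -- rewrite L Z
  have e1 : (-(Wᴴ * DWs⁻¹)) * Z + DW⁻¹ = DW⁻¹ * (1 - Wᴴ * Z) := by
    rw [Matrix.mul_sub, Matrix.mul_one, ← Matrix.mul_assoc, ← r2]
    noncomm_ring
  have e2 : DWs⁻¹ * Z + -(DWs⁻¹ * W) = DWs⁻¹ * (Z - W) := by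
    rw [Matrix.mul_sub]; noncomm_ring
  have hMeq : L Z = (DWs⁻¹ * (Z - W)) * ((1 - Wᴴ * Z)⁻¹ * DW) := by
    simp only [hL]
    rw [e1, e2, Matrix.mul_inv_rev, Matrix.nonsing_inv_nonsing_inv _ hDWdet]
  -- relations between inverses
  have hPinv : (1 - Wᴴ * W)⁻¹ = DW⁻¹ * DW⁻¹ := by rw [← hDW, Matrix.mul_inv_rev]
  have hQinv : (1 - W * Wᴴ)⁻¹ = DWs⁻¹ * DWs⁻¹ := by rw [← hDWs, Matrix.mul_inv_rev]
  have cP : (1 - Wᴴ * W)⁻¹ * (1 - Wᴴ * W) = 1 := Matrix.nonsing_inv_mul _ hPdet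
  have cP' : (1 - Wᴴ * W) * (1 - Wᴴ * W)⁻¹ = 1 := Matrix.mul_nonsing_inv _ hPdet
  have cQ : (1 - W * Wᴴ)⁻¹ * (1 - W * Wᴴ) = 1 := Matrix.nonsing_inv_mul _ hQdet
  have cQ' : (1 - W * Wᴴ) * (1 - W * Wᴴ)⁻¹ = 1 := Matrix.mul_nonsing_inv _ hQdet
  have cQu : ∀ T : Matrix (Fin N) (Fin N) ℂ,
      (1 - W * Wᴴ)⁻¹ * ((1 - W * Wᴴ) * T) = T := fun T => by
    rw [← Matrix.mul_assoc, cQ, Matrix.one_mul]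
  have u2e : W * (1 - Wᴴ * W)⁻¹ = (1 - W * Wᴴ)⁻¹ * W := by
    have e := congrArg (fun M => (1 - W * Wᴴ)⁻¹ * (M * (1 - Wᴴ * W)⁻¹)) hcomm
    simp only [Matrix.mul_assoc, cP', Matrix.mul_one, cQu] at e
    exact e.symm
  have u1e : (1 - Wᴴ * W)⁻¹ * Wᴴ = Wᴴ * (1 - W * Wᴴ)⁻¹ := by
    have e := congrArg Matrix.conjTranspose u2e
    simpa [Matrix.conjTranspose_mul, Matrix.conjTranspose_nonsing_inv, Matrix.conjTranspose_sub,
      Matrix.conjTranspose_one] using e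
  -- star identity
  have hstar : (1 - Zᴴ * W) * ((1 - Wᴴ * W)⁻¹ * (1 - Wᴴ * Z))
      = (1 - Zᴴ * Z) + (Zᴴ - Wᴴ) * ((1 - W * Wᴴ)⁻¹ * (Z - W)) := by
    have u1 : ∀ T : Matrix (Fin N) (Fin N) ℂ,
        (1 - Wᴴ * W)⁻¹ * (Wᴴ * T) = Wᴴ * ((1 - W * Wᴴ)⁻¹ * T) := fun T => by
      rw [← Matrix.mul_assoc, u1e, Matrix.mul_assoc]
    have u2 : ∀ T : Matrix (Fin N) (Fin N) ℂ,
        W * ((1 - Wᴴ * W)⁻¹ * T) = (1 - W * Wᴴ)⁻¹ * (W * T) := fun T => by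
      rw [← Matrix.mul_assoc, u2e, Matrix.mul_assoc]
    have u3q : ∀ T : Matrix (Fin N) (Fin N) ℂ,
        (1 - W * Wᴴ)⁻¹ * (W * (Wᴴ * T)) = (1 - W * Wᴴ)⁻¹ * T - T := fun T => by
      have h0 : W * (Wᴴ * T) = T - (1 - W * Wᴴ) * T := by noncomm_ring
      rw [h0, Matrix.mul_sub, cQu]
    have u3g : ∀ T : Matrix (Fin N) (Fin N) ℂ,
        W * (Wᴴ * ((1 - W * Wᴴ)⁻¹ * T)) = (1 - W * Wᴴ)⁻¹ * T - T := fun T => by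
      have h0 : W * (Wᴴ * ((1 - W * Wᴴ)⁻¹ * T))
          = (1 - W * Wᴴ)⁻¹ * T - (1 - W * Wᴴ) * ((1 - W * Wᴴ)⁻¹ * T) := by noncomm_ring
      rw [h0, ← Matrix.mul_assoc, cQ', Matrix.one_mul]
    have u5e : Wᴴ * ((1 - W * Wᴴ)⁻¹ * W) = (1 - Wᴴ * W)⁻¹ - 1 := by
      rw [← u1 W]
      have h0 : (1 - Wᴴ * W)⁻¹ * (Wᴴ * W)
          = (1 - Wᴴ * W)⁻¹ * 1 - (1 - Wᴴ * W)⁻¹ * (1 - Wᴴ * W) := by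
        rw [← Matrix.mul_sub]
        congr 1
        noncomm_ring
      rw [h0, cP, Matrix.mul_one]
    simp only [Matrix.mul_sub, Matrix.sub_mul, Matrix.mul_one, Matrix.one_mul]
    simp only [Matrix.mul_assoc]
    simp only [u1, u2, u2e, u3q, u3g, u5e, cQu, Matrix.mul_sub, Matrix.sub_mul,
      Matrix.mul_one, Matrix.one_mul]
    abel
  -- key identity
  have hB : (1 - Zᴴ * Z)
      = (1 - Zᴴ * W) * ((1 - Wᴴ * W)⁻¹ * (1 - Wᴴ * Z))
        - (Zᴴ - Wᴴ) * ((1 - W * Wᴴ)⁻¹ * (Z - W)) :=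
    eq_sub_of_add_eq hstar.symm
  have kSH : ∀ T : Matrix (Fin N) (Fin N) ℂ,
      (1 - Zᴴ * W)⁻¹ * ((1 - Zᴴ * W) * T) = T := fun T => by
    rw [← Matrix.mul_assoc, cSH, Matrix.one_mul]
  have kS' : ∀ T : Matrix (Fin N) (Fin N) ℂ,
      (1 - Wᴴ * Z) * ((1 - Wᴴ * Z)⁻¹ * T) = T := fun T => by
    rw [← Matrix.mul_assoc, cS', Matrix.one_mul]
  have kDW : ∀ T : Matrix (Fin N) (Fin N) ℂ, DW * (DW⁻¹ * T) = T := fun T => by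
    rw [← Matrix.mul_assoc, hDWi', Matrix.one_mul]
  have hsH : (1 - Wᴴ * Z)ᴴ = 1 - Zᴴ * W := by
    simp [Matrix.conjTranspose_sub, Matrix.conjTranspose_mul,
      Matrix.conjTranspose_one, Matrix.conjTranspose_conjTranspose]
  have hRH : ((1 - Wᴴ * Z)⁻¹ * DW)ᴴ = DW * (1 - Zᴴ * W)⁻¹ := by
    rw [Matrix.conjTranspose_mul, Matrix.conjTranspose_nonsing_inv, hsH, hDWherm]
  have hMH : (DWs⁻¹ * (Z - W) * ((1 - Wᴴ * Z)⁻¹ * DW))ᴴ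
      = (DW * (1 - Zᴴ * W)⁻¹) * ((Zᴴ - Wᴴ) * DWs⁻¹) := by
    rw [Matrix.conjTranspose_mul, hRH, Matrix.conjTranspose_mul, Matrix.conjTranspose_sub,
      Matrix.conjTranspose_nonsing_inv, hDWsherm]
  have hMM : (DWs⁻¹ * (Z - W) * ((1 - Wᴴ * Z)⁻¹ * DW))ᴴ
        * (DWs⁻¹ * (Z - W) * ((1 - Wᴴ * Z)⁻¹ * DW))
      = (DW * (1 - Zᴴ * W)⁻¹)
        * (((Zᴴ - Wᴴ) * ((1 - W * Wᴴ)⁻¹ * (Z - W))) * ((1 - Wᴴ * Z)⁻¹ * DW)) := by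
    rw [hMH]
    simp only [hQinv, Matrix.mul_assoc]
  have hE : (DW * (1 - Zᴴ * W)⁻¹)
      * (((1 - Zᴴ * W) * ((1 - Wᴴ * W)⁻¹ * (1 - Wᴴ * Z))) * ((1 - Wᴴ * Z)⁻¹ * DW)) = 1 := by
    simp only [hPinv, Matrix.mul_assoc, kSH, kS', kDW, hDWi, hDWi', Matrix.mul_one, mul_one]
  have key : 1 - (L Z)ᴴ * L Z
      = ((1 - Wᴴ * Z)⁻¹ * DW)ᴴ * ((1 - Zᴴ * Z) * ((1 - Wᴴ * Z)⁻¹ * DW)) := by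
    rw [hMeq, hMM, hB, hRH,
      sub_mul ((1 - Zᴴ * W) * ((1 - Wᴴ * W)⁻¹ * (1 - Wᴴ * Z)))
        ((Zᴴ - Wᴴ) * ((1 - W * Wᴴ)⁻¹ * (Z - W))) ((1 - Wᴴ * Z)⁻¹ * DW),
      mul_sub (DW * (1 - Zᴴ * W)⁻¹), hE]
  have hpd : (1 - (L Z)ᴴ * L Z).PosDef := by
    rw [key, ← Matrix.mul_assoc]
    refine posDef_conj (posDef_one_sub hZ) (R' := DW⁻¹ * (1 - Wᴴ * Z)) ?_
    rw [Matrix.mul_assoc, ← Matrix.mul_assoc (1 - Wᴴ * Z), cS', Matrix.one_mul, hDWi]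
  exact norm_lt_one hpd
end

section
/- Let W be an N×N matrix with ‖W‖ < 1 and Z′ with ‖Z′‖ < 1. Then the inverse of the linear-fractional map L_W is given by L_W⁻¹(Z′) = D_{W*}(I + Z′W*)⁻¹(Z′ + W)(D_W)⁻¹, i.e., L_W(D_{W*}(I + Z′W*)⁻¹(Z′ + W)D_W⁻¹) = Z′. -/
open scoped Matrix.Norms.L2Operator ComplexOrder Matrix
open Polynomial

-- conjugation by unitary commutes with aeval
lemma aeval_conj_unitary {n : ℕ} (V A : Matrix (Fin n) (Fin n) ℂ) (hV : star V * V = 1)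
    (p : ℝ[X]) : aeval (V * A * star V) p = V * aeval A p * star V := by
  have hV' : V * star V = 1 := mul_eq_one_comm.mp hV
  induction p using Polynomial.induction_on' with
  | add p q hp hq => simp only [map_add, hp, hq, Matrix.mul_add, Matrix.add_mul]
  | monomial k a =>
    have hpow : (V * A * star V) ^ k = V * A ^ k * star V := by
      induction k with
      | zero => simpa using hV'.symm
      | succ m ih =>
        rw [pow_succ, pow_succ, ih]
        calc V * A ^ m * star V * (V * A * star V)
            = V * A ^ m * (star V * V) * (A * star V) := by
              simp only [Matrix.mul_assoc]
          _ = V * (A ^ m * A) * star V := by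
              rw [hV]; simp only [Matrix.mul_one, Matrix.mul_assoc]
    rw [aeval_monomial, aeval_monomial, hpow, ← Algebra.smul_def, ← Algebra.smul_def,
      Matrix.mul_smul, Matrix.smul_mul]

lemma aeval_diagonal' {n : ℕ} (d : Fin n → ℂ) (p : ℝ[X]) :
    aeval (Matrix.diagonal d) p = Matrix.diagonal (fun i => aeval (d i) p) := by
  induction p using Polynomial.induction_on' with
  | add p q hp hq => simp [hp, hq, Matrix.diagonal_add]
  | monomial k a =>
    simp only [aeval_monomial, Matrix.diagonal_pow, Matrix.algebraMap_eq_diagonal,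
      Matrix.diagonal_mul_diagonal]
    refine congrArg Matrix.diagonal (funext fun i => ?_)
    simp [Pi.algebraMap_apply]

/-- The positive semidefinite square root (as in the older Mathlib). -/
noncomputable def Matrix.PosSemidef.sqrt {n : ℕ} {S : Matrix (Fin n) (Fin n) ℂ}
    (hS : S.PosSemidef) : Matrix (Fin n) (Fin n) ℂ :=
  (hS.1.eigenvectorUnitary : Matrix (Fin n) (Fin n) ℂ) *
    Matrix.diagonal ((RCLike.ofReal ∘ Real.sqrt ∘ hS.1.eigenvalues) : Fin n → ℂ) *
    star (hS.1.eigenvectorUnitary : Matrix (Fin n) (Fin n) ℂ)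

lemma sqrt_eq_aeval {n : ℕ} {S : Matrix (Fin n) (Fin n) ℂ} (hS : S.PosSemidef) (p : ℝ[X])
    (hp : ∀ i, p.eval (hS.1.eigenvalues i) = Real.sqrt (hS.1.eigenvalues i)) :
    aeval S p = hS.sqrt := by
  conv_lhs => rw [hS.1.spectral_theorem, Unitary.conjStarAlgAut_apply]
  rw [aeval_conj_unitary _ _ (Matrix.mem_unitaryGroup_iff'.mp hS.1.eigenvectorUnitary.2),
    aeval_diagonal']
  rw [Matrix.PosSemidef.sqrt]
  have hdiag : (fun i => aeval ((RCLike.ofReal ∘ hS.1.eigenvalues) i) p)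
      = ((RCLike.ofReal ∘ Real.sqrt ∘ hS.1.eigenvalues) : Fin n → ℂ) := by
    funext i
    simp only [Function.comp_apply]
    rw [show (RCLike.ofReal (hS.1.eigenvalues i) : ℂ) = algebraMap ℝ ℂ (hS.1.eigenvalues i)
        from rfl,
      Polynomial.aeval_algebraMap_apply_eq_algebraMap_eval, hp i]
  rw [hdiag]

lemma aeval_intertwine {n : ℕ} (W S S' : Matrix (Fin n) (Fin n) ℂ)
    (h : W * S = S' * W) (p : ℝ[X]) :
    W * aeval S p = aeval S' p * W := by
  induction p using Polynomial.induction_on' with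
  | add p q hp hq => simp only [map_add, Matrix.mul_add, Matrix.add_mul, hp, hq]
  | monomial k a =>
    have hpow : ∀ m, W * S ^ m = S' ^ m * W := by
      intro m; induction m with
      | zero => simp
      | succ l ih =>
        rw [pow_succ, pow_succ, ← Matrix.mul_assoc, ih, Matrix.mul_assoc, h, ← Matrix.mul_assoc]
    rw [aeval_monomial, aeval_monomial, ← Algebra.smul_def, ← Algebra.smul_def,
      Matrix.mul_smul, Matrix.smul_mul, hpow]

lemma intertwine_sqrt {n : ℕ} (W : Matrix (Fin n) (Fin n) ℂ)
    {S S' : Matrix (Fin n) (Fin n) ℂ} (hS : S.PosSemidef) (hS' : S'.PosSemidef)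
    (h : W * S = S' * W) : W * hS.sqrt = hS'.sqrt * W := by
  classical
  set t : Finset ℝ :=
    (Finset.univ.image hS.1.eigenvalues) ∪ (Finset.univ.image hS'.1.eigenvalues) with ht
  set p : ℝ[X] := Lagrange.interpolate t id Real.sqrt with hpdef
  have hinj : Set.InjOn id (t : Set ℝ) := Function.injective_id.injOn
  have hev : ∀ x ∈ t, p.eval x = Real.sqrt x := fun x hx => by
    simpa [hpdef] using Lagrange.eval_interpolate_at_node Real.sqrt hinj hx
  rw [← sqrt_eq_aeval hS p (fun i => hev _ (by simp [ht])),
      ← sqrt_eq_aeval hS' p (fun i => hev _ (by simp [ht]))]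
  exact aeval_intertwine W S S' h p

lemma Matrix.PosSemidef.eq_sqrt_of_sq_eq {n : ℕ} {A B : Matrix (Fin n) (Fin n) ℂ}
    (hA : A.PosSemidef) (hB : B.PosSemidef) (hAB : A ^ 2 = B) : A = hB.sqrt := by
  classical
  set t : Finset ℝ := (Finset.univ.image hB.1.eigenvalues) ∪
    (Finset.univ.image (fun i => hA.1.eigenvalues i ^ 2)) with ht
  set p : ℝ[X] := Lagrange.interpolate t id Real.sqrt with hpdef
  have hinj : Set.InjOn id (t : Set ℝ) := Function.injective_id.injOn
  have hev : ∀ x ∈ t, p.eval x = Real.sqrt x := fun x hx => by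
    simpa [hpdef] using Lagrange.eval_interpolate_at_node Real.sqrt hinj hx
  rw [← sqrt_eq_aeval hB p (fun i => hev _ (by simp [ht])), ← hAB]
  set U : Matrix (Fin n) (Fin n) ℂ := (hA.1.eigenvectorUnitary : Matrix (Fin n) (Fin n) ℂ)
    with hUdef
  have hU : star U * U = 1 := Matrix.mem_unitaryGroup_iff'.mp hA.1.eigenvectorUnitary.2
  set D : Matrix (Fin n) (Fin n) ℂ := Matrix.diagonal (RCLike.ofReal ∘ hA.1.eigenvalues)
    with hDdef
  have hA' : A = U * D * star U := by
    conv_lhs => rw [hA.1.spectral_theorem, Unitary.conjStarAlgAut_apply]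
  have hA2 : A ^ 2 = U * Matrix.diagonal (fun i => (((hA.1.eigenvalues i ^ 2 : ℝ)) : ℂ))
      * star U := by
    rw [sq]
    conv_lhs => rw [hA']
    calc U * D * star U * (U * D * star U) = U * D * (star U * U) * D * star U := by
          simp only [Matrix.mul_assoc]
      _ = _ := by
          rw [hU, Matrix.mul_one, Matrix.mul_assoc U D D, hDdef, Matrix.diagonal_mul_diagonal]
          congr 2
          funext i
          simp [sq]
  rw [hA2, aeval_conj_unitary _ _ hU, aeval_diagonal']
  refine hA'.trans ?_
  rw [hDdef]
  refine congrArg (fun M => U * M * star U) (congrArg Matrix.diagonal (funext fun i => ?_))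
  rw [show (((hA.1.eigenvalues i ^ 2 : ℝ)) : ℂ) = algebraMap ℝ ℂ (hA.1.eigenvalues i ^ 2)
      from rfl, Polynomial.aeval_algebraMap_apply_eq_algebraMap_eval,
    hev _ (by simp [ht]), Real.sqrt_sq (hA.eigenvalues_nonneg i)]
  rfl

/-- For `‖W‖ < 1` and `‖Z′‖ < 1`, the map `Z′ ↦ D_{W*}(I + Z′W*)⁻¹(Z′ + W)(D_W)⁻¹` is the
inverse of the linear-fractional map `L_W`:
`L_W(D_{W*}(I + Z′W*)⁻¹(Z′ + W)D_W⁻¹) = Z′`. -/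
theorem stmt17 {N : ℕ} (W DW DWs Z' : Matrix (Fin N) (Fin N) ℂ)
    (hW : ‖W‖ < 1) (hZ' : ‖Z'‖ < 1)
    (hDWpos : DW.PosSemidef) (hDW : DW * DW = 1 - Wᴴ * W)
    (hDWspos : DWs.PosSemidef) (hDWs : DWs * DWs = 1 - W * Wᴴ)
    (L : Matrix (Fin N) (Fin N) ℂ → Matrix (Fin N) (Fin N) ℂ)
    (hL : L = fun Z => (DWs⁻¹ * Z + (-(DWs⁻¹ * W))) * ((-(Wᴴ * DWs⁻¹)) * Z + DW⁻¹)⁻¹) :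
    L (DWs * (1 + Z' * Wᴴ)⁻¹ * (Z' + W) * DW⁻¹) = Z' := by
  -- `DW`, `DWs` are the canonical psd square roots
  have hS : (1 - Wᴴ * W).PosSemidef := by
    rw [← hDW]
    have h := Matrix.posSemidef_conjTranspose_mul_self DW
    rwa [hDWpos.1] at h
  have hS' : (1 - W * Wᴴ).PosSemidef := by
    rw [← hDWs]
    have h := Matrix.posSemidef_conjTranspose_mul_self DWs
    rwa [hDWspos.1] at h
  have hDWsq : DW = hS.sqrt := hDWpos.eq_sqrt_of_sq_eq hS (by rw [sq, hDW])
  have hDWssq : DWs = hS'.sqrt := hDWspos.eq_sqrt_of_sq_eq hS' (by rw [sq, hDWs])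
  have hcomm : W * (1 - Wᴴ * W) = (1 - W * Wᴴ) * W := by noncomm_ring
  have hint : W * DW = DWs * W := by
    rw [hDWsq, hDWssq]; exact intertwine_sqrt W hS hS' hcomm
  -- invertibility of everything
  have hWn : (0:ℝ) ≤ ‖W‖ := norm_nonneg _
  have hZn : (0:ℝ) ≤ ‖Z'‖ := norm_nonneg _
  haveI : CompleteSpace (Matrix (Fin N) (Fin N) ℂ) := FiniteDimensional.complete ℂ _
  have unit_of : ∀ X : Matrix (Fin N) (Fin N) ℂ, ‖X‖ < 1 → IsUnit (1 + X) := by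
    intro X hX
    have h' : ‖-X‖ < 1 := by rwa [norm_neg]
    have := isUnit_one_sub_of_norm_lt_one h'
    rwa [sub_neg_eq_add] at this
  have hZW : ‖Z' * Wᴴ‖ < 1 := lt_of_le_of_lt (norm_mul_le _ _)
    (by rw [Matrix.l2_opNorm_conjTranspose]; nlinarith)
  have hWZ : ‖Wᴴ * Z'‖ < 1 := lt_of_le_of_lt (norm_mul_le _ _)
    (by rw [Matrix.l2_opNorm_conjTranspose]; nlinarith)
  have hWW : ‖Wᴴ * W‖ < 1 := lt_of_le_of_lt (norm_mul_le _ _)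
    (by rw [Matrix.l2_opNorm_conjTranspose]; nlinarith)
  have hWWs : ‖W * Wᴴ‖ < 1 := lt_of_le_of_lt (norm_mul_le _ _)
    (by rw [Matrix.l2_opNorm_conjTranspose]; nlinarith)
  have hPu : IsUnit (1 + Z' * Wᴴ) := unit_of _ hZW
  have hQu : IsUnit (1 + Wᴴ * Z') := unit_of _ hWZ
  have hSu : IsUnit (1 - Wᴴ * W) := by
    have := unit_of (-(Wᴴ * W)) (by rwa [norm_neg]); rwa [← sub_eq_add_neg] at this
  have hS'u : IsUnit (1 - W * Wᴴ) := by
    have := unit_of (-(W * Wᴴ)) (by rwa [norm_neg]); rwa [← sub_eq_add_neg] at this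
  have hDWu : IsUnit DW := by
    rw [Matrix.isUnit_iff_isUnit_det]
    have h1 : IsUnit (1 - Wᴴ * W).det := (Matrix.isUnit_iff_isUnit_det _).mp hSu
    rw [← hDW, Matrix.det_mul] at h1
    exact isUnit_of_mul_isUnit_left h1
  have hDWsu : IsUnit DWs := by
    rw [Matrix.isUnit_iff_isUnit_det]
    have h1 : IsUnit (1 - W * Wᴴ).det := (Matrix.isUnit_iff_isUnit_det _).mp hS'u
    rw [← hDWs, Matrix.det_mul] at h1
    exact isUnit_of_mul_isUnit_left h1
  haveI := hPu.invertible
  haveI := hQu.invertible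
  haveI := hDWu.invertible
  haveI := hDWsu.invertible
  -- core computations
  have hA : DWs⁻¹ * (DWs * (1 + Z' * Wᴴ)⁻¹ * (Z' + W) * DW⁻¹)
      = (1 + Z' * Wᴴ)⁻¹ * (Z' + W) * DW⁻¹ := by
    rw [show DWs * (1 + Z' * Wᴴ)⁻¹ * (Z' + W) * DW⁻¹
        = DWs * ((1 + Z' * Wᴴ)⁻¹ * (Z' + W) * DW⁻¹) by simp only [Matrix.mul_assoc],
      Matrix.inv_mul_cancel_left_of_invertible]
  have hB : DWs⁻¹ * W = W * DW⁻¹ := by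
    calc DWs⁻¹ * W = DWs⁻¹ * (W * DW * DW⁻¹) := by
          rw [Matrix.mul_inv_cancel_right_of_invertible]
      _ = DWs⁻¹ * (DWs * (W * DW⁻¹)) := by rw [hint, Matrix.mul_assoc]
      _ = W * DW⁻¹ := by rw [Matrix.inv_mul_cancel_left_of_invertible]
  have hWQ : Wᴴ * (1 + Z' * Wᴴ)⁻¹ = (1 + Wᴴ * Z')⁻¹ * Wᴴ := by
    have h1 : (1 + Wᴴ * Z') * Wᴴ = Wᴴ * (1 + Z' * Wᴴ) := by noncomm_ring
    have h2 : (1 + Wᴴ * Z') * (Wᴴ * (1 + Z' * Wᴴ)⁻¹) = Wᴴ := by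
      rw [← Matrix.mul_assoc, h1, Matrix.mul_assoc, Matrix.mul_inv_of_invertible,
        Matrix.mul_one]
    calc Wᴴ * (1 + Z' * Wᴴ)⁻¹
        = (1 + Wᴴ * Z')⁻¹ * ((1 + Wᴴ * Z') * (Wᴴ * (1 + Z' * Wᴴ)⁻¹)) := by
          rw [Matrix.inv_mul_cancel_left_of_invertible]
      _ = (1 + Wᴴ * Z')⁻¹ * Wᴴ := by rw [h2]
  -- numerator
  have hkey : (Z' + W) - (1 + Z' * Wᴴ) * W = Z' * (DW * DW) := by rw [hDW]; noncomm_ring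
  have hnum : DWs⁻¹ * (DWs * (1 + Z' * Wᴴ)⁻¹ * (Z' + W) * DW⁻¹) + -(DWs⁻¹ * W)
      = (1 + Z' * Wᴴ)⁻¹ * Z' * DW := by
    have e : (1 + Z' * Wᴴ)⁻¹ * ((Z' + W) - (1 + Z' * Wᴴ) * W) * DW⁻¹
        = (1 + Z' * Wᴴ)⁻¹ * (Z' * (DW * DW)) * DW⁻¹ := by rw [hkey]
    rw [mul_sub, Matrix.inv_mul_cancel_left_of_invertible, sub_mul, sub_eq_add_neg] at e
    rw [hA, hB, e]
    simp only [Matrix.mul_assoc, Matrix.mul_inv_of_invertible, Matrix.mul_one]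
  -- denominator
  have hkey2 : (1 + Wᴴ * Z') - Wᴴ * (Z' + W) = DW * DW := by rw [hDW]; noncomm_ring
  have h3 : Wᴴ * ((1 + Z' * Wᴴ)⁻¹ * (Z' + W) * DW⁻¹)
      = (1 + Wᴴ * Z')⁻¹ * (Wᴴ * (Z' + W)) * DW⁻¹ := by
    simp only [← Matrix.mul_assoc]
    rw [hWQ]
  have hden : -(Wᴴ * DWs⁻¹) * (DWs * (1 + Z' * Wᴴ)⁻¹ * (Z' + W) * DW⁻¹) + DW⁻¹
      = (1 + Wᴴ * Z')⁻¹ * DW := by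
    have e2 : (1 + Wᴴ * Z')⁻¹ * ((1 + Wᴴ * Z') - Wᴴ * (Z' + W)) * DW⁻¹
        = (1 + Wᴴ * Z')⁻¹ * (DW * DW) * DW⁻¹ := by rw [hkey2]
    rw [mul_sub, Matrix.inv_mul_of_invertible, sub_mul, one_mul] at e2
    have h4 : -(Wᴴ * DWs⁻¹) * (DWs * (1 + Z' * Wᴴ)⁻¹ * (Z' + W) * DW⁻¹)
        = -((1 + Wᴴ * Z')⁻¹ * (Wᴴ * (Z' + W)) * DW⁻¹) := by
      rw [neg_mul, Matrix.mul_assoc, hA, h3]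
    rw [h4, neg_add_eq_sub, e2]
    simp only [Matrix.mul_assoc, Matrix.mul_inv_of_invertible, Matrix.mul_one]
  -- assemble
  rw [hL]
  simp only
  rw [hnum, hden, Matrix.mul_inv_rev, Matrix.inv_inv_of_invertible]
  have h5 : Z' * (1 + Wᴴ * Z') = (1 + Z' * Wᴴ) * Z' := by noncomm_ring
  calc (1 + Z' * Wᴴ)⁻¹ * Z' * DW * (DW⁻¹ * (1 + Wᴴ * Z'))
      = (1 + Z' * Wᴴ)⁻¹ * (Z' * (1 + Wᴴ * Z')) := by
        simp only [Matrix.mul_assoc, Matrix.mul_inv_cancel_left_of_invertible]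
    _ = Z' := by rw [h5, Matrix.inv_mul_cancel_left_of_invertible]
end

section
/- Let S and S̃ be N×N matrix-valued functions on a domain R related by S(z) = D_{S(0)*}(I + S̃(z)S(0)*)⁻¹(S̃(z) + S(0))(D_{S(0)})⁻¹, where ‖S(0)‖ < 1 and ‖S̃(z)‖ < 1 for all z. Then for all z, w ∈ R: I - S(z)S(w)* = D_{S(0)*}(I + S̃(z)S(0)*)⁻¹(I - S̃(z)S̃(w)*)(I + S(0)S̃(w)*)⁻¹ D_{S(0)*}. -/
open scoped Matrix.Norms.L2Operator ComplexOrder Matrix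

lemma stmt18_core {n : ℕ} (S₀ X Y Q : Matrix (Fin n) (Fin n) ℂ)
    (h1 : S₀ᴴ * S₀ * Q = Q - 1) (h2 : Q * (S₀ᴴ * S₀) = Q - 1) :
    (1 + X * S₀ᴴ) * (1 + S₀ * Q * S₀ᴴ) * (1 + S₀ * Y) - (X + S₀) * Q * (Y + S₀ᴴ) = 1 - X * Y := by
  have r1 : ∀ Z : Matrix (Fin n) (Fin n) ℂ, S₀ᴴ * (S₀ * (Q * Z)) = Q * Z - Z := by
    intro Z
    have := congrArg (· * Z) h1
    simpa [mul_assoc, sub_mul] using this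
  have r2 : ∀ Z : Matrix (Fin n) (Fin n) ℂ, Q * (S₀ᴴ * (S₀ * Z)) = Q * Z - Z := by
    intro Z
    have := congrArg (· * Z) h2
    simpa [mul_assoc, sub_mul] using this
  simp only [mul_add, add_mul, mul_sub, sub_mul, mul_one, one_mul, mul_assoc, r1, r2]
  abel

/-- If `S(z) = D_{S(0)*}(I + S̃(z)S(0)*)⁻¹(S̃(z) + S(0))(D_{S(0)})⁻¹` with `‖S(0)‖ < 1` and
`‖S̃(z)‖ < 1` on `R`, then for all `z, w ∈ R`:
`I - S(z)S(w)* = D_{S(0)*}(I + S̃(z)S(0)*)⁻¹(I - S̃(z)S̃(w)*)(I + S(0)S̃(w)*)⁻¹ D_{S(0)*}`. -/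
theorem stmt18 {N : ℕ} (R : Set ℂ)
    (S St : ℂ → Matrix (Fin N) (Fin N) ℂ)
    (S₀ DW DWs : Matrix (Fin N) (Fin N) ℂ)
    (hS₀ : ‖S₀‖ < 1) (hSt : ∀ z ∈ R, ‖St z‖ < 1)
    (hDWpos : DW.PosSemidef) (hDW : DW * DW = 1 - S₀ᴴ * S₀)
    (hDWspos : DWs.PosSemidef) (hDWs : DWs * DWs = 1 - S₀ * S₀ᴴ)
    (hrel : ∀ z ∈ R, S z = DWs * (1 + St z * S₀ᴴ)⁻¹ * (St z + S₀) * DW⁻¹) :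
    ∀ z ∈ R, ∀ w ∈ R,
      1 - S z * (S w)ᴴ =
        DWs * (1 + St z * S₀ᴴ)⁻¹ * (1 - St z * (St w)ᴴ) * (1 + S₀ * (St w)ᴴ)⁻¹ * DWs := by
  have hS₀0 : 0 ≤ ‖S₀‖ := norm_nonneg _
  have hmul : ‖S₀ᴴ * S₀‖ < 1 := by
    calc ‖S₀ᴴ * S₀‖ ≤ ‖S₀ᴴ‖ * ‖S₀‖ := norm_mul_le _ _
    _ = ‖S₀‖ * ‖S₀‖ := by rw [Matrix.l2_opNorm_conjTranspose]
    _ < 1 := by nlinarith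
  have hmul' : ‖S₀ * S₀ᴴ‖ < 1 := by
    calc ‖S₀ * S₀ᴴ‖ ≤ ‖S₀‖ * ‖S₀ᴴ‖ := norm_mul_le _ _
    _ = ‖S₀‖ * ‖S₀‖ := by rw [Matrix.l2_opNorm_conjTranspose]
    _ < 1 := by nlinarith
  have hQu : IsUnit (1 - S₀ᴴ * S₀) := (Units.oneSub _ hmul).isUnit
  have hPu : IsUnit (1 - S₀ * S₀ᴴ) := (Units.oneSub _ hmul').isUnit
  have hDWu : IsUnit DW := by
    rw [Matrix.isUnit_iff_isUnit_det]
    have : IsUnit (DW * DW) := hDW ▸ hQu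
    rw [Matrix.isUnit_iff_isUnit_det, Matrix.det_mul] at this
    exact isUnit_of_mul_isUnit_left this
  have hDWsu : IsUnit DWs := by
    rw [Matrix.isUnit_iff_isUnit_det]
    have : IsUnit (DWs * DWs) := hDWs ▸ hPu
    rw [Matrix.isUnit_iff_isUnit_det, Matrix.det_mul] at this
    exact isUnit_of_mul_isUnit_left this
  set Q : Matrix (Fin N) (Fin N) ℂ := (1 - S₀ᴴ * S₀)⁻¹ with hQdef
  have hQ1 : (1 - S₀ᴴ * S₀) * Q = 1 :=
    Matrix.mul_nonsing_inv _ ((Matrix.isUnit_iff_isUnit_det _).mp hQu)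
  have hQ2 : Q * (1 - S₀ᴴ * S₀) = 1 :=
    Matrix.nonsing_inv_mul _ ((Matrix.isUnit_iff_isUnit_det _).mp hQu)
  have h1 : S₀ᴴ * S₀ * Q = Q - 1 := by
    have h := hQ1
    rw [sub_mul, one_mul] at h
    linear_combination (norm := noncomm_ring) -h
  have h2 : Q * (S₀ᴴ * S₀) = Q - 1 := by
    have h := hQ2
    rw [mul_sub, mul_one] at h
    linear_combination (norm := noncomm_ring) -h
  have hPinv : (1 - S₀ * S₀ᴴ) * (1 + S₀ * Q * S₀ᴴ) = 1 := by
    have expand : (1 - S₀ * S₀ᴴ) * (1 + S₀ * Q * S₀ᴴ) =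
        1 + S₀ * Q * S₀ᴴ - S₀ * S₀ᴴ - S₀ * (S₀ᴴ * S₀ * Q) * S₀ᴴ := by noncomm_ring
    rw [expand, h1]
    noncomm_ring
  have hDWi2 : DW⁻¹ * DW = 1 := Matrix.nonsing_inv_mul _ ((Matrix.isUnit_iff_isUnit_det _).mp hDWu)
  have hDWsi1 : DWs * DWs⁻¹ = 1 :=
    Matrix.mul_nonsing_inv _ ((Matrix.isUnit_iff_isUnit_det _).mp hDWsu)
  have hDWsi2 : DWs⁻¹ * DWs = 1 :=
    Matrix.nonsing_inv_mul _ ((Matrix.isUnit_iff_isUnit_det _).mp hDWsu)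
  have hQDW : Q = DW⁻¹ * DW⁻¹ := by
    rw [hQdef, ← hDW, Matrix.mul_inv_rev]
  have hsand : DWs * (1 + S₀ * Q * S₀ᴴ) * DWs = 1 := by
    rw [← Matrix.inv_eq_right_inv hPinv, ← hDWs, Matrix.mul_inv_rev]
    calc DWs * (DWs⁻¹ * DWs⁻¹) * DWs = (DWs * DWs⁻¹) * (DWs⁻¹ * DWs) := by noncomm_ring
    _ = 1 := by rw [hDWsi1, hDWsi2, one_mul]
  intro z hz w hw
  have hAu : IsUnit (1 + St z * S₀ᴴ) := by
    have h : ‖-(St z * S₀ᴴ)‖ < 1 := by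
      rw [norm_neg]
      calc ‖St z * S₀ᴴ‖ ≤ ‖St z‖ * ‖S₀ᴴ‖ := norm_mul_le _ _
      _ = ‖St z‖ * ‖S₀‖ := by rw [Matrix.l2_opNorm_conjTranspose]
      _ < 1 := by nlinarith [hSt z hz, norm_nonneg (St z)]
    have := (Units.oneSub _ h).isUnit
    rwa [Units.val_oneSub, sub_neg_eq_add] at this
  have hBu : IsUnit (1 + S₀ * (St w)ᴴ) := by
    have h : ‖-(S₀ * (St w)ᴴ)‖ < 1 := by
      rw [norm_neg]
      calc ‖S₀ * (St w)ᴴ‖ ≤ ‖S₀‖ * ‖(St w)ᴴ‖ := norm_mul_le _ _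
      _ = ‖S₀‖ * ‖St w‖ := by rw [Matrix.l2_opNorm_conjTranspose]
      _ < 1 := by nlinarith [hSt w hw, norm_nonneg (St w)]
    have := (Units.oneSub _ h).isUnit
    rwa [Units.val_oneSub, sub_neg_eq_add] at this
  have hA2 : (1 + St z * S₀ᴴ)⁻¹ * (1 + St z * S₀ᴴ) = 1 :=
    Matrix.nonsing_inv_mul _ ((Matrix.isUnit_iff_isUnit_det _).mp hAu)
  have hB1 : (1 + S₀ * (St w)ᴴ) * (1 + S₀ * (St w)ᴴ)⁻¹ = 1 :=
    Matrix.mul_nonsing_inv _ ((Matrix.isUnit_iff_isUnit_det _).mp hBu)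
  have hSwH : (S w)ᴴ = DW⁻¹ * ((St w)ᴴ + S₀ᴴ) * (1 + S₀ * (St w)ᴴ)⁻¹ * DWs := by
    rw [hrel w hw]
    simp only [Matrix.conjTranspose_mul, Matrix.conjTranspose_nonsing_inv,
      Matrix.conjTranspose_add, Matrix.conjTranspose_one, Matrix.conjTranspose_conjTranspose,
      hDWpos.isHermitian.eq, hDWspos.isHermitian.eq]
    noncomm_ring
  have hcore := stmt18_core S₀ (St z) ((St w)ᴴ) Q h1 h2
  symm
  calc DWs * (1 + St z * S₀ᴴ)⁻¹ * (1 - St z * (St w)ᴴ) * (1 + S₀ * (St w)ᴴ)⁻¹ * DWs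
      = DWs * (1 + St z * S₀ᴴ)⁻¹ *
          ((1 + St z * S₀ᴴ) * (1 + S₀ * Q * S₀ᴴ) * (1 + S₀ * (St w)ᴴ)
            - (St z + S₀) * Q * ((St w)ᴴ + S₀ᴴ)) * (1 + S₀ * (St w)ᴴ)⁻¹ * DWs := by
        rw [hcore]
    _ = DWs * (((1 + St z * S₀ᴴ)⁻¹ * (1 + St z * S₀ᴴ)) * (1 + S₀ * Q * S₀ᴴ) *
            ((1 + S₀ * (St w)ᴴ) * (1 + S₀ * (St w)ᴴ)⁻¹)) * DWs
          - (DWs * (1 + St z * S₀ᴴ)⁻¹ * (St z + S₀) * DW⁻¹) *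
            (DW⁻¹ * ((St w)ᴴ + S₀ᴴ) * (1 + S₀ * (St w)ᴴ)⁻¹ * DWs) := by
        rw [hQDW]; noncomm_ring
    _ = DWs * (1 * (1 + S₀ * Q * S₀ᴴ) * 1) * DWs - S z * (S w)ᴴ := by
        rw [hA2, hB1, ← hSwH, ← hrel z hz]
    _ = 1 - S z * (S w)ᴴ := by rw [one_mul, mul_one, hsand]
end
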